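/- arXiv:1305.0375 — 5 statements merged into one kernel-verified Lean document; each statement's English description precedes it below -/
import Mathlib

section
/- Let d ≥ 1 and let (U(s,t))_{s≤t} be a Feller evolution system on C₀(ℝ^d). For f ∈ C₀(ℝ × ℝ^d) and t ≥ 0 define T(t)f(s,x) := (U(s,s+t) f(s+t,·))(x) (note that f(r,·) ∈ C₀(ℝ^d) for every r). Then (T(t))_{t≥0} is a Feller semigroup on C₀(ℝ × ℝ^d): each T(t) is a linear map of C₀(ℝ × ℝ^d) into itself, T(t)f ≥ 0 whenever f ≥ 0, ‖T(t)f‖_∞ ≤ ‖f‖_∞, T(0) = id, T(t+r) = T(t)∘T(r) for all t,r ≥ 0, and lim_{t↓0} ‖T(t)f − f‖_∞ = 0 for every f ∈ C₀(ℝ × ℝ^d). -/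
open Filter Topology
open scoped ZeroAtInfty

/-- `U` is a Feller evolution system on `C₀(ℝ^d)`: each `U(s,t)` (for `s ≤ t`) is a
positivity-preserving linear contraction of `C₀(ℝ^d)` into itself, `U(s,s) = id`,
`U(s,t) = U(s,r) ∘ U(r,t)` for `s ≤ r ≤ t`, and `(s,t) ↦ U(s,t)f` is jointly strongly
continuous on `{(s,t) : s ≤ t}`. -/
def IsFellerEvolution {d : ℕ}
    (U : ℝ → ℝ → (EuclideanSpace ℝ (Fin d) →C₀ ℝ) →ₗ[ℝ] (EuclideanSpace ℝ (Fin d) →C₀ ℝ)) :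
    Prop :=
  (∀ s t, s ≤ t → ∀ f, ‖U s t f‖ ≤ ‖f‖) ∧
  (∀ s t, s ≤ t → ∀ f, (∀ x, 0 ≤ f x) → ∀ x, 0 ≤ U s t f x) ∧
  (∀ s, U s s = LinearMap.id) ∧
  (∀ s r t, s ≤ r → r ≤ t → U s t = (U s r) ∘ₗ (U r t)) ∧
  (∀ (f : EuclideanSpace ℝ (Fin d) →C₀ ℝ) (v w : ℝ), v ≤ w →
    Tendsto (fun p : ℝ × ℝ => ‖U p.1 p.2 f - U v w f‖)
      (𝓝[{p : ℝ × ℝ | p.1 ≤ p.2}] (v, w)) (𝓝 0))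

/-- The time slice `f(r,·)` of `f ∈ C₀(ℝ × ℝ^d)`, as an element of `C₀(ℝ^d)`. -/
noncomputable def timeSlice {d : ℕ} (f : (ℝ × EuclideanSpace ℝ (Fin d)) →C₀ ℝ) (r : ℝ) :
    EuclideanSpace ℝ (Fin d) →C₀ ℝ where
  toFun x := f (r, x)
  continuous_toFun := f.continuous.comp (Continuous.prodMk_right r)
  zero_at_infty' := by
    have h : IsClosedEmbedding (fun x : EuclideanSpace ℝ (Fin d) =>
        ((r, x) : ℝ × EuclideanSpace ℝ (Fin d))) := by
      refine ⟨isEmbedding_prodMkRight r, ?_⟩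
      have hr : Set.range (fun x : EuclideanSpace ℝ (Fin d) =>
          ((r, x) : ℝ × EuclideanSpace ℝ (Fin d))) = {r} ×ˢ Set.univ := by
        ext p; simp [Set.mem_prod, eq_comm, Prod.ext_iff]
      rw [hr]
      exact isClosed_singleton.prod isClosed_univ
    exact f.zero_at_infty'.comp h.tendsto_cocompact

/-- The space-time semigroup `T(t)f(s,x) := (U(s,s+t) f(s+t,·))(x)`, as a plain function on
`ℝ × ℝ^d`. -/
noncomputable def spaceTime {d : ℕ}
    (U : ℝ → ℝ → (EuclideanSpace ℝ (Fin d) →C₀ ℝ) →ₗ[ℝ] (EuclideanSpace ℝ (Fin d) →C₀ ℝ))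
    (t : ℝ) (f : (ℝ × EuclideanSpace ℝ (Fin d)) →C₀ ℝ) :
    ℝ × EuclideanSpace ℝ (Fin d) → ℝ :=
  fun p => U p.1 (p.1 + t) (timeSlice f (p.1 + t)) p.2

/-!
The space-time function `T(t)f` is the uncurrying of `s ↦ U(s,s+t) f(s+t,·)`, a continuous map
`ℝ → C₀(ℝ^d)` vanishing at infinity, and such an uncurrying lies in `C₀(ℝ × ℝ^d)` because a
compact family in `C₀(ℝ^d)` vanishes at infinity uniformly. Strong continuity is the uniform
convergence `U(s,s+t) f(s+t,·) → f(s,·)` in `s` as `t ↓ 0`: it holds on compact sets of `s` by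
joint continuity of `(s,t) ↦ U(s,s+t) f(s+t,·)` and a tube-lemma argument, and for large `|s|`
because both sides are small there.
-/

namespace ZeroAtInftyContinuousMap

variable {X Y β : Type*} [TopologicalSpace X] [TopologicalSpace Y] [NormedAddCommGroup β]

theorem norm_apply_le (g : Y →C₀ β) (y : Y) : ‖g y‖ ≤ ‖g‖ :=
  norm_toBCF_eq_norm (f := g) ▸ g.toBCF.norm_coe_le_norm y

theorem dist_apply_le (g h : Y →C₀ β) (y : Y) : dist (g y) (h y) ≤ dist g h :=
  dist_toBCF_eq_dist (f := g) ▸ g.toBCF.dist_coe_le_dist (g := h.toBCF) y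

theorem norm_le_of_forall_le {g : Y →C₀ β} {C : ℝ} (hC : 0 ≤ C) (h : ∀ y, ‖g y‖ ≤ C) :
    ‖g‖ ≤ C := by
  rw [← norm_toBCF_eq_norm]
  exact (BoundedContinuousFunction.norm_le hC).2 h

theorem tendsto_uncurry_cocompact {G : X → Y →C₀ β} (hG : Continuous G)
    (h0 : Tendsto G (cocompact X) (𝓝 0)) :
    Tendsto (fun p : X × Y => G p.1 p.2) (cocompact (X × Y)) (𝓝 0) := by
  refine tendsto_zero_iff_norm_tendsto_zero.2 (Metric.tendsto_nhds.2 fun ε hε => ?_)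
  simp only [dist_zero_right, norm_norm]
  obtain ⟨K, hK, hKG⟩ := mem_cocompact.1
    ((tendsto_zero_iff_norm_tendsto_zero.1 h0).eventually (gt_mem_nhds hε))
  have off_K : ∀ x ∉ K, ∀ y, ‖G x y‖ < ε := fun x hx y => (norm_apply_le _ y).trans_lt (hKG hx)
  have near : ∀ x ∈ K, ∀ᶠ q in cocompact Y ×ˢ 𝓝 x, ‖G q.2 q.1‖ < ε := by
    intro x _
    have hGx : ∀ᶠ y in cocompact Y, ‖G x y‖ < ε / 2 :=
      (tendsto_zero_iff_norm_tendsto_zero.1 (G x).zero_at_infty').eventually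
        (gt_mem_nhds (half_pos hε))
    have hG_near : ∀ᶠ x' in 𝓝 x, ‖G x' - G x‖ < ε / 2 :=
      (tendsto_iff_norm_sub_tendsto_zero.1 (hG.tendsto x)).eventually (gt_mem_nhds (half_pos hε))
    filter_upwards [hGx.prod_mk hG_near] with ⟨y, x'⟩ ⟨hy, hx'⟩
    calc ‖G x' y‖ ≤ ‖(G x' - G x) y‖ + ‖G x y‖ := norm_le_norm_sub_add _ _
      _ < ε / 2 + ε / 2 := add_lt_add_of_le_of_lt ((norm_apply_le _ y).trans hx'.le) hy
      _ = ε := add_halves ε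
  have on_K : ∀ᶠ y in cocompact Y, ∀ x ∈ K, ‖G x y‖ < ε :=
    (Eventually.curry (hK.mem_prod_nhdsSet_of_forall near)).mono fun _ h => h.self_of_nhdsSet
  rw [← coprod_cocompact]
  refine eventually_sup.2 ⟨?_, (on_K.comap Prod.snd).mono fun p hp => ?_⟩
  · exact mem_comap.2 ⟨Kᶜ, hK.compl_mem_cocompact, fun p hp => off_K p.1 hp p.2⟩
  · by_cases hpK : p.1 ∈ K
    exacts [hp p.1 hpK, off_K p.1 hpK p.2]

def uncurry (G : X → Y →C₀ β) (hG : Continuous G) (h0 : Tendsto G (cocompact X) (𝓝 0)) :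
    (X × Y) →C₀ β where
  toFun p := G p.1 p.2
  continuous_toFun := (isometry_toBCF.continuous.comp (hG.comp continuous_fst)).eval continuous_snd
  zero_at_infty' := tendsto_uncurry_cocompact hG h0

end ZeroAtInftyContinuousMap

theorem tendsto_snd_add_fst_nhds_prod_cocompact {G : Type*} [AddGroup G] [TopologicalSpace G]
    [IsTopologicalAddGroup G] [WeaklyLocallyCompactSpace G] (a : G) :
    Tendsto (fun q : G × G => q.2 + q.1) (𝓝 a ×ˢ cocompact G) (cocompact G) := by
  refine hasBasis_cocompact.tendsto_right_iff.2 fun K hK => ?_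
  obtain ⟨V, hVc, hV⟩ := exists_compact_mem_nhds a
  have hKV : IsCompact ((fun q : G × G => q.1 - q.2) '' K ×ˢ V) :=
    (hK.prod hVc).image continuous_sub
  filter_upwards [prod_mem_prod hV hKV.compl_mem_cocompact] with q ⟨hqV, hqK⟩ hmem
  exact hqK ⟨(q.2 + q.1, q.1), ⟨hmem, hqV⟩, add_sub_cancel_right _ _⟩

theorem tendstoUniformly_of_continuousOn_of_tendsto_cocompact {T X E : Type*}
    [TopologicalSpace T] [TopologicalSpace X] [SeminormedAddCommGroup E] {S : Set T} {a : T}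
    (ha : a ∈ S) {F : T → X → E} (hF : ContinuousOn ↿F (S ×ˢ Set.univ))
    (h0 : Tendsto ↿F (𝓝[S] a ×ˢ cocompact X) (𝓝 0)) :
    TendstoUniformly F (F a) (𝓝[S] a) := by
  refine Metric.tendstoUniformly_iff.2 fun ε hε => ?_
  obtain ⟨small, h_small, far, h_far, hF_small⟩ := eventually_prod_iff.1
    ((tendsto_zero_iff_norm_tendsto_zero.1 h0).eventually (gt_mem_nhds (half_pos hε)))
  obtain ⟨K, hK, hK_far⟩ := mem_cocompact.1 h_far
  have near : ∀ x ∈ K, ∀ᶠ q in 𝓝[S] a ×ˢ 𝓝 x, dist (F a q.2) (F q.1 q.2) < ε := by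
    intro x _
    have hFx : Tendsto ↿F (𝓝[S] a ×ˢ 𝓝 x) (𝓝 (F a x)) := by
      have := hF (a, x) ⟨ha, trivial⟩
      rwa [ContinuousWithinAt, nhdsWithin_prod_eq, nhdsWithin_univ] at this
    have hFa : Continuous (F a) :=
      hF.comp_continuous (continuous_const.prodMk continuous_id) fun _ => ⟨ha, trivial⟩
    have hdist := ((hFa.tendsto x).comp tendsto_snd).dist hFx
    rw [dist_self] at hdist
    exact hdist.eventually (gt_mem_nhds hε)
  have on_K : ∀ᶠ t in 𝓝[S] a, ∀ x ∈ K, dist (F a x) (F t x) < ε :=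
    (Eventually.curry (hK.mem_prod_nhdsSet_of_forall near)).mono fun _ h => h.self_of_nhdsSet
  filter_upwards [on_K, h_small] with t ht_K ht_small x
  by_cases hx : x ∈ K
  · exact ht_K x hx
  · calc dist (F a x) (F t x) ≤ ‖F a x‖ + ‖F t x‖ := dist_le_norm_add_norm _ _
      _ < ε / 2 + ε / 2 :=
        add_lt_add (hF_small (h_small.self_of_nhdsWithin ha) (hK_far hx))
          (hF_small ht_small (hK_far hx))
      _ = ε := add_halves ε

section timeSlice

variable {d : ℕ} (f : (ℝ × EuclideanSpace ℝ (Fin d)) →C₀ ℝ)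

theorem timeSlice_apply (r : ℝ) (x : EuclideanSpace ℝ (Fin d)) : timeSlice f r x = f (r, x) :=
  rfl

theorem timeSlice_add (g : (ℝ × EuclideanSpace ℝ (Fin d)) →C₀ ℝ) (r : ℝ) :
    timeSlice (f + g) r = timeSlice f r + timeSlice g r :=
  rfl

theorem timeSlice_smul (c : ℝ) (r : ℝ) : timeSlice (c • f) r = c • timeSlice f r :=
  rfl

theorem norm_timeSlice_le (r : ℝ) : ‖timeSlice f r‖ ≤ ‖f‖ :=
  ZeroAtInftyContinuousMap.norm_le_of_forall_le (norm_nonneg f) fun x =>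
    ZeroAtInftyContinuousMap.norm_apply_le f (r, x)

theorem uniformContinuous_timeSlice : UniformContinuous (timeSlice f) := by
  refine Metric.uniformContinuous_iff.2 fun ε hε => ?_
  obtain ⟨δ, hδ, hf⟩ := Metric.uniformContinuous_iff.1
    (ZeroAtInftyContinuousMap.uniformContinuous f) (ε / 2) (half_pos hε)
  refine ⟨δ, hδ, fun {r r'} hrr' => ?_⟩
  rw [dist_eq_norm]
  refine (ZeroAtInftyContinuousMap.norm_le_of_forall_le (half_pos hε).le fun x => ?_).trans_lt
    (half_lt_self hε)
  rw [ZeroAtInftyContinuousMap.coe_sub, Pi.sub_apply, ← dist_eq_norm]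
  exact (hf (by simpa [Prod.dist_eq] using hrr')).le

theorem tendsto_timeSlice_cocompact : Tendsto (timeSlice f) (cocompact ℝ) (𝓝 0) := by
  refine tendsto_zero_iff_norm_tendsto_zero.2 (Metric.tendsto_nhds.2 fun ε hε => ?_)
  have hf : ∀ᶠ p in comap Prod.fst (cocompact ℝ), ‖f p‖ < ε / 2 :=
    ((tendsto_zero_iff_norm_tendsto_zero.1 f.zero_at_infty').eventually
      (gt_mem_nhds (half_pos hε))).filter_mono (comap_cocompact_le continuous_fst)
  filter_upwards [eventually_comap.1 hf] with r hr
  rw [dist_zero_right, norm_norm]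
  exact (ZeroAtInftyContinuousMap.norm_le_of_forall_le (half_pos hε).le
    fun x => (hr (r, x) rfl).le).trans_lt (half_lt_self hε)

end timeSlice

noncomputable def spaceTimeSlice {d : ℕ}
    (U : ℝ → ℝ → (EuclideanSpace ℝ (Fin d) →C₀ ℝ) →ₗ[ℝ] (EuclideanSpace ℝ (Fin d) →C₀ ℝ))
    (t : ℝ) (f : (ℝ × EuclideanSpace ℝ (Fin d)) →C₀ ℝ) (s : ℝ) : EuclideanSpace ℝ (Fin d) →C₀ ℝ :=
  U s (s + t) (timeSlice f (s + t))

section spaceTime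

variable {d : ℕ}
  {U : ℝ → ℝ → (EuclideanSpace ℝ (Fin d) →C₀ ℝ) →ₗ[ℝ] (EuclideanSpace ℝ (Fin d) →C₀ ℝ)}
  {t : ℝ} (f : (ℝ × EuclideanSpace ℝ (Fin d)) →C₀ ℝ)

theorem spaceTime_apply (p : ℝ × EuclideanSpace ℝ (Fin d)) :
    spaceTime U t f p = spaceTimeSlice U t f p.1 p.2 :=
  rfl

theorem spaceTime_add (g : (ℝ × EuclideanSpace ℝ (Fin d)) →C₀ ℝ)
    (p : ℝ × EuclideanSpace ℝ (Fin d)) :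
    spaceTime U t (f + g) p = spaceTime U t f p + spaceTime U t g p := by
  simp only [spaceTime, timeSlice_add, map_add, ZeroAtInftyContinuousMap.add_apply]

theorem spaceTime_smul (c : ℝ) (p : ℝ × EuclideanSpace ℝ (Fin d)) :
    spaceTime U t (c • f) p = c * spaceTime U t f p := by
  simp only [spaceTime, timeSlice_smul, map_smul, ZeroAtInftyContinuousMap.smul_apply, smul_eq_mul]

end spaceTime

namespace IsFellerEvolution

variable {d : ℕ}
  {U : ℝ → ℝ → (EuclideanSpace ℝ (Fin d) →C₀ ℝ) →ₗ[ℝ] (EuclideanSpace ℝ (Fin d) →C₀ ℝ)}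

theorem norm_apply_le (hU : IsFellerEvolution U) {s t : ℝ} (hst : s ≤ t)
    (g : EuclideanSpace ℝ (Fin d) →C₀ ℝ) : ‖U s t g‖ ≤ ‖g‖ :=
  hU.1 s t hst g

theorem apply_nonneg (hU : IsFellerEvolution U) {s t : ℝ} (hst : s ≤ t)
    {g : EuclideanSpace ℝ (Fin d) →C₀ ℝ} (hg : ∀ x, 0 ≤ g x) (x : EuclideanSpace ℝ (Fin d)) :
    0 ≤ U s t g x :=
  hU.2.1 s t hst g hg x

theorem apply_self (hU : IsFellerEvolution U) (s : ℝ) (g : EuclideanSpace ℝ (Fin d) →C₀ ℝ) :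
    U s s g = g := by
  rw [hU.2.2.1 s, LinearMap.id_apply]

theorem apply_eq_apply_apply (hU : IsFellerEvolution U) {s r t : ℝ} (hsr : s ≤ r) (hrt : r ≤ t)
    (g : EuclideanSpace ℝ (Fin d) →C₀ ℝ) : U s t g = U s r (U r t g) := by
  rw [hU.2.2.2.1 s r t hsr hrt, LinearMap.comp_apply]

theorem continuousOn_uncurry (hU : IsFellerEvolution U) :
    ContinuousOn (fun q : (ℝ × ℝ) × (EuclideanSpace ℝ (Fin d) →C₀ ℝ) => U q.1.1 q.1.2 q.2)
      ({p : ℝ × ℝ | p.1 ≤ p.2} ×ˢ Set.univ) := by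
  rintro ⟨⟨v, w⟩, g₀⟩ ⟨hvw, -⟩
  rw [ContinuousWithinAt, tendsto_iff_norm_sub_tendsto_zero]
  have hg : Tendsto (fun q : (ℝ × ℝ) × (EuclideanSpace ℝ (Fin d) →C₀ ℝ) => ‖q.2 - g₀‖)
      (𝓝 ((v, w), g₀)) (𝓝 0) :=
    tendsto_iff_norm_sub_tendsto_zero.1 (continuous_snd.tendsto _)
  have hvw' : Tendsto (fun q : (ℝ × ℝ) × (EuclideanSpace ℝ (Fin d) →C₀ ℝ) => q.1)
      (𝓝[{p : ℝ × ℝ | p.1 ≤ p.2} ×ˢ Set.univ] ((v, w), g₀))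
      (𝓝[{p : ℝ × ℝ | p.1 ≤ p.2}] (v, w)) :=
    tendsto_nhdsWithin_iff.2 ⟨continuous_fst.continuousWithinAt,
      eventually_nhdsWithin_of_forall fun _ hq => hq.1⟩
  refine squeeze_zero' (Eventually.of_forall fun _ => norm_nonneg _) ?_
    (by simpa using (hg.mono_left nhdsWithin_le_nhds).add ((hU.2.2.2.2 g₀ v w hvw).comp hvw'))
  refine eventually_nhdsWithin_of_forall fun ⟨⟨s, r⟩, g⟩ ⟨hsr, _⟩ => ?_
  calc ‖U s r g - U v w g₀‖ = ‖U s r (g - g₀) + (U s r g₀ - U v w g₀)‖ := by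
        rw [map_sub, sub_add_sub_cancel]
    _ ≤ ‖g - g₀‖ + ‖U s r g₀ - U v w g₀‖ :=
        (norm_add_le _ _).trans (add_le_add_left (hU.norm_apply_le hsr _) _)

theorem norm_spaceTimeSlice_le (hU : IsFellerEvolution U) {t : ℝ} (ht : 0 ≤ t)
    (f : (ℝ × EuclideanSpace ℝ (Fin d)) →C₀ ℝ) (s : ℝ) :
    ‖spaceTimeSlice U t f s‖ ≤ ‖timeSlice f (s + t)‖ :=
  hU.norm_apply_le (le_add_of_nonneg_right ht) _

theorem spaceTimeSlice_zero (hU : IsFellerEvolution U)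
    (f : (ℝ × EuclideanSpace ℝ (Fin d)) →C₀ ℝ) :
    spaceTimeSlice U 0 f = timeSlice f := by
  ext1 s
  rw [spaceTimeSlice, add_zero, hU.apply_self]

theorem continuousOn_spaceTimeSlice (hU : IsFellerEvolution U)
    (f : (ℝ × EuclideanSpace ℝ (Fin d)) →C₀ ℝ) :
    ContinuousOn (fun q : ℝ × ℝ => spaceTimeSlice U q.1 f q.2) (Set.Ici 0 ×ˢ Set.univ) := by
  have hq : Continuous fun q : ℝ × ℝ => q.2 + q.1 := continuous_snd.add continuous_fst
  have hslice : Continuous fun q : ℝ × ℝ => timeSlice f (q.2 + q.1) :=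
    (uniformContinuous_timeSlice f).continuous.comp hq
  refine hU.continuousOn_uncurry.comp ((continuous_snd.prodMk hq).prodMk hslice).continuousOn
    fun q hq => ⟨(le_add_of_nonneg_right hq.1 : q.2 ≤ q.2 + q.1), trivial⟩

theorem tendsto_spaceTimeSlice_nhdsGE_prod_cocompact (hU : IsFellerEvolution U) {t : ℝ}
    (ht : 0 ≤ t) (f : (ℝ × EuclideanSpace ℝ (Fin d)) →C₀ ℝ) :
    Tendsto (fun q : ℝ × ℝ => spaceTimeSlice U q.1 f q.2) (𝓝[≥] t ×ˢ cocompact ℝ) (𝓝 0) := by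
  refine squeeze_zero_norm' ((eventually_mem_nhdsWithin.prod_inl _).mono fun q hq =>
    hU.norm_spaceTimeSlice_le (ht.trans hq) f q.2) ?_
  exact tendsto_norm_zero.comp ((tendsto_timeSlice_cocompact f).comp
    ((tendsto_snd_add_fst_nhds_prod_cocompact t).mono_left (prod_mono nhdsWithin_le_nhds le_rfl)))

theorem tendsto_spaceTimeSlice_cocompact (hU : IsFellerEvolution U) {t : ℝ} (ht : 0 ≤ t)
    (f : (ℝ × EuclideanSpace ℝ (Fin d)) →C₀ ℝ) :
    Tendsto (spaceTimeSlice U t f) (cocompact ℝ) (𝓝 0) :=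
  (hU.tendsto_spaceTimeSlice_nhdsGE_prod_cocompact ht f).comp
    ((tendsto_nhdsWithin_iff.2 ⟨tendsto_const_nhds, Eventually.of_forall fun _ => le_rfl⟩).prodMk
      tendsto_id)

theorem tendstoUniformly_spaceTimeSlice (hU : IsFellerEvolution U)
    (f : (ℝ × EuclideanSpace ℝ (Fin d)) →C₀ ℝ) :
    TendstoUniformly (fun t => spaceTimeSlice U t f) (timeSlice f) (𝓝[≥] 0) :=
  hU.spaceTimeSlice_zero f ▸
    tendstoUniformly_of_continuousOn_of_tendsto_cocompact Set.self_mem_Ici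
      (hU.continuousOn_spaceTimeSlice f) (hU.tendsto_spaceTimeSlice_nhdsGE_prod_cocompact le_rfl f)

theorem exists_eq_spaceTime (hU : IsFellerEvolution U) {t : ℝ} (ht : 0 ≤ t)
    (f : (ℝ × EuclideanSpace ℝ (Fin d)) →C₀ ℝ) :
    ∃ g : (ℝ × EuclideanSpace ℝ (Fin d)) →C₀ ℝ, ∀ p, g p = spaceTime U t f p :=
  have hcont : Continuous (spaceTimeSlice U t f) :=
    (hU.continuousOn_spaceTimeSlice f).comp_continuous (continuous_const.prodMk continuous_id)
      fun _ => ⟨ht, trivial⟩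
  ⟨.uncurry _ hcont (hU.tendsto_spaceTimeSlice_cocompact ht f), fun _ => rfl⟩

theorem spaceTime_nonneg (hU : IsFellerEvolution U) {t : ℝ} (ht : 0 ≤ t)
    {f : (ℝ × EuclideanSpace ℝ (Fin d)) →C₀ ℝ} (hf : ∀ p, 0 ≤ f p)
    (p : ℝ × EuclideanSpace ℝ (Fin d)) : 0 ≤ spaceTime U t f p :=
  hU.apply_nonneg (le_add_of_nonneg_right ht) (fun x => hf (p.1 + t, x)) p.2

theorem abs_spaceTime_le (hU : IsFellerEvolution U) {t : ℝ} (ht : 0 ≤ t)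
    (f : (ℝ × EuclideanSpace ℝ (Fin d)) →C₀ ℝ) (p : ℝ × EuclideanSpace ℝ (Fin d)) :
    |spaceTime U t f p| ≤ ‖f‖ :=
  calc |spaceTime U t f p| ≤ ‖spaceTimeSlice U t f p.1‖ :=
        ZeroAtInftyContinuousMap.norm_apply_le (spaceTimeSlice U t f p.1) p.2
    _ ≤ ‖timeSlice f (p.1 + t)‖ := hU.norm_spaceTimeSlice_le ht f p.1
    _ ≤ ‖f‖ := norm_timeSlice_le f _

theorem spaceTime_zero (hU : IsFellerEvolution U) (f : (ℝ × EuclideanSpace ℝ (Fin d)) →C₀ ℝ)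
    (p : ℝ × EuclideanSpace ℝ (Fin d)) : spaceTime U 0 f p = f p := by
  rw [spaceTime_apply, hU.spaceTimeSlice_zero, timeSlice_apply]

theorem spaceTime_add_time (hU : IsFellerEvolution U) {t r : ℝ} (ht : 0 ≤ t) (hr : 0 ≤ r)
    {f g : (ℝ × EuclideanSpace ℝ (Fin d)) →C₀ ℝ} (hg : ∀ p, g p = spaceTime U r f p)
    (p : ℝ × EuclideanSpace ℝ (Fin d)) : spaceTime U (t + r) f p = spaceTime U t g p := by
  have hslice : timeSlice g (p.1 + t) = spaceTimeSlice U r f (p.1 + t) :=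
    ZeroAtInftyContinuousMap.ext fun x => hg (p.1 + t, x)
  rw [spaceTime_apply, spaceTime_apply, spaceTimeSlice, spaceTimeSlice, hslice, spaceTimeSlice,
    ← add_assoc,
    hU.apply_eq_apply_apply (le_add_of_nonneg_right ht) (le_add_of_nonneg_right hr)]

theorem tendstoUniformly_spaceTime (hU : IsFellerEvolution U)
    (f : (ℝ × EuclideanSpace ℝ (Fin d)) →C₀ ℝ) :
    TendstoUniformly (fun t => spaceTime U t f) f (𝓝[≥] 0) := by
  refine Metric.tendstoUniformly_iff.2 fun ε hε => ?_
  filter_upwards [Metric.tendstoUniformly_iff.1 (hU.tendstoUniformly_spaceTimeSlice f) ε hε]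
    with t ht p
  exact (ZeroAtInftyContinuousMap.dist_apply_le _ _ p.2).trans_lt (ht p.1)

end IsFellerEvolution

theorem spaceTime_isFellerSemigroup_general
    (d : ℕ)
    (U : ℝ → ℝ → (EuclideanSpace ℝ (Fin d) →C₀ ℝ) →ₗ[ℝ] (EuclideanSpace ℝ (Fin d) →C₀ ℝ))
    (hU : IsFellerEvolution U) :
    -- T(t) maps C₀(ℝ × ℝ^d) into itself
    (∀ t, 0 ≤ t → ∀ f : (ℝ × EuclideanSpace ℝ (Fin d)) →C₀ ℝ,
      ∃ g : (ℝ × EuclideanSpace ℝ (Fin d)) →C₀ ℝ, ∀ p, g p = spaceTime U t f p) ∧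
    -- T(t) is linear
    (∀ t, 0 ≤ t → ∀ f g : (ℝ × EuclideanSpace ℝ (Fin d)) →C₀ ℝ, ∀ p,
      spaceTime U t (f + g) p = spaceTime U t f p + spaceTime U t g p) ∧
    (∀ t, 0 ≤ t → ∀ (c : ℝ) (f : (ℝ × EuclideanSpace ℝ (Fin d)) →C₀ ℝ), ∀ p,
      spaceTime U t (c • f) p = c * spaceTime U t f p) ∧
    -- T(t) is positivity preserving
    (∀ t, 0 ≤ t → ∀ f : (ℝ × EuclideanSpace ℝ (Fin d)) →C₀ ℝ,
      (∀ p, 0 ≤ f p) → ∀ p, 0 ≤ spaceTime U t f p) ∧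
    -- T(t) is a sup-norm contraction
    (∀ t, 0 ≤ t → ∀ f : (ℝ × EuclideanSpace ℝ (Fin d)) →C₀ ℝ, ∀ p,
      |spaceTime U t f p| ≤ ‖f‖) ∧
    -- T(0) = id
    (∀ f : (ℝ × EuclideanSpace ℝ (Fin d)) →C₀ ℝ, ∀ p, spaceTime U 0 f p = f p) ∧
    -- semigroup property T(t+r) = T(t) ∘ T(r)
    (∀ t r, 0 ≤ t → 0 ≤ r → ∀ f g : (ℝ × EuclideanSpace ℝ (Fin d)) →C₀ ℝ,
      (∀ p, g p = spaceTime U r f p) → ∀ p, spaceTime U (t + r) f p = spaceTime U t g p) ∧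
    -- strong continuity at t = 0
    (∀ f : (ℝ × EuclideanSpace ℝ (Fin d)) →C₀ ℝ, ∀ ε > (0:ℝ), ∃ δ > (0:ℝ),
      ∀ t, 0 < t → t < δ → ∀ p, |spaceTime U t f p - f p| ≤ ε) := by
  refine ⟨fun t ht f => hU.exists_eq_spaceTime ht f, fun t _ f g => spaceTime_add f g,
    fun t _ c f => spaceTime_smul f c, fun t ht f => hU.spaceTime_nonneg ht,
    fun t ht => hU.abs_spaceTime_le ht, hU.spaceTime_zero,
    fun t r ht hr f g => hU.spaceTime_add_time ht hr, fun f ε hε => ?_⟩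
  obtain ⟨δ, hδ, hδε⟩ := mem_nhdsGE_iff_exists_Ico_subset.1
    (Metric.tendstoUniformly_iff.1 (hU.tendstoUniformly_spaceTime f) ε hε)
  refine ⟨δ, hδ, fun t ht htδ p => ?_⟩
  rw [← Real.dist_eq, dist_comm]
  exact (hδε ⟨ht.le, htδ⟩ p).le

/-- If `U` is a Feller evolution system on `C₀(ℝ^d)`, then the space-time
operators `T(t)f(s,x) = (U(s,s+t)f(s+t,·))(x)` form a Feller semigroup on `C₀(ℝ × ℝ^d)`:
each `T(t)` is a positivity-preserving linear contraction mapping `C₀(ℝ × ℝ^d)` into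
itself, `T(0) = id`, `T(t+r) = T(t) ∘ T(r)`, and `t ↦ T(t)` is strongly continuous at `0`. -/
theorem spaceTime_isFellerSemigroup
    (d : ℕ) (hd : 1 ≤ d)
    (U : ℝ → ℝ → (EuclideanSpace ℝ (Fin d) →C₀ ℝ) →ₗ[ℝ] (EuclideanSpace ℝ (Fin d) →C₀ ℝ))
    (hU : IsFellerEvolution U) :
    -- T(t) maps C₀(ℝ × ℝ^d) into itself
    (∀ t, 0 ≤ t → ∀ f : (ℝ × EuclideanSpace ℝ (Fin d)) →C₀ ℝ,
      ∃ g : (ℝ × EuclideanSpace ℝ (Fin d)) →C₀ ℝ, ∀ p, g p = spaceTime U t f p) ∧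
    -- T(t) is linear
    (∀ t, 0 ≤ t → ∀ f g : (ℝ × EuclideanSpace ℝ (Fin d)) →C₀ ℝ, ∀ p,
      spaceTime U t (f + g) p = spaceTime U t f p + spaceTime U t g p) ∧
    (∀ t, 0 ≤ t → ∀ (c : ℝ) (f : (ℝ × EuclideanSpace ℝ (Fin d)) →C₀ ℝ), ∀ p,
      spaceTime U t (c • f) p = c * spaceTime U t f p) ∧
    -- T(t) is positivity preserving
    (∀ t, 0 ≤ t → ∀ f : (ℝ × EuclideanSpace ℝ (Fin d)) →C₀ ℝ,
      (∀ p, 0 ≤ f p) → ∀ p, 0 ≤ spaceTime U t f p) ∧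
    -- T(t) is a sup-norm contraction
    (∀ t, 0 ≤ t → ∀ f : (ℝ × EuclideanSpace ℝ (Fin d)) →C₀ ℝ, ∀ p,
      |spaceTime U t f p| ≤ ‖f‖) ∧
    -- T(0) = id
    (∀ f : (ℝ × EuclideanSpace ℝ (Fin d)) →C₀ ℝ, ∀ p, spaceTime U 0 f p = f p) ∧
    -- semigroup property T(t+r) = T(t) ∘ T(r)
    (∀ t r, 0 ≤ t → 0 ≤ r → ∀ f g : (ℝ × EuclideanSpace ℝ (Fin d)) →C₀ ℝ,
      (∀ p, g p = spaceTime U r f p) → ∀ p, spaceTime U (t + r) f p = spaceTime U t g p) ∧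
    -- strong continuity at t = 0
    (∀ f : (ℝ × EuclideanSpace ℝ (Fin d)) →C₀ ℝ, ∀ ε > (0:ℝ), ∃ δ > (0:ℝ),
      ∀ t, 0 < t → t < δ → ∀ p, |spaceTime U t f p - f p| ≤ ε) :=
  spaceTime_isFellerSemigroup_general d U hU
end

section
/- Let d ≥ 1 and let (U(s,t))_{s≤t} be a Feller evolution system on C₀(ℝ^d). Then for every f ∈ C₀(ℝ × ℝ^d), lim_{t↓0} sup_{(s,x)∈ℝ×ℝ^d} |(U(s,s+t) f(s+t,·))(x) − f(s,x)| = 0; i.e., the space-time semigroup T(t)f(s,x) := (U(s,s+t)f(s+t,·))(x) is strongly continuous at t = 0 on C₀(ℝ × ℝ^d). -/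
/-!
Write `g r = f(r, ·) ∈ C₀(ℝ^d)`. Because the `U(s,t)` are contractions and strongly continuous,
`(s,t) ↦ U(s,t) g(t)` is continuous on the half-plane `s ≤ t`, and its norm is at most `‖g t‖`,
which tends to `0` as `|t| → ∞`. On the strip `0 ≤ t - s ≤ 1`, parametrised by
`(t, t - s) ∈ ℝ × [0,1]`, it is thus a continuous function vanishing at infinity, hence uniformly
continuous; uniform continuity between the points `(s, s)` and `(s, s + t)` is exactly
`sup_s ‖U(s,s+t) g(s+t) - g s‖ → 0`.
-/

open Filter Topology
open scoped ZeroAtInfty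

namespace ZeroAtInftyContinuousMap

variable {α β : Type*} [TopologicalSpace α] [PseudoMetricSpace β] [Zero β]

theorem dist_coe_le_dist (f g : C₀(α, β)) (x : α) : dist (f x) (g x) ≤ dist f g := by
  rw [← dist_toBCF_eq_dist]
  exact BoundedContinuousFunction.dist_coe_le_dist (f := f.toBCF) (g := g.toBCF) x

theorem dist_le {f g : C₀(α, β)} {C : ℝ} (hC : 0 ≤ C) :
    dist f g ≤ C ↔ ∀ x, dist (f x) (g x) ≤ C := by
  rw [← dist_toBCF_eq_dist]
  exact BoundedContinuousFunction.dist_le hC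

end ZeroAtInftyContinuousMap

section

variable {X E : Type*} [TopologicalSpace X] [PseudoMetricSpace E]

theorem ContinuousOn.apply_of_dist_le {T : X → E → E} {S : Set X} {g : X → E}
    (hT : ∀ x ∈ S, ∀ u v, dist (T x u) (T x v) ≤ dist u v)
    (hcont : ∀ v, ContinuousOn (fun x => T x v) S) (hg : ContinuousOn g S) :
    ContinuousOn (fun x => T x (g x)) S := by
  intro x₀ hx₀
  rw [ContinuousWithinAt, tendsto_iff_dist_tendsto_zero]
  have hsplit : Tendsto (fun x => dist (g x) (g x₀) + dist (T x (g x₀)) (T x₀ (g x₀)))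
      (𝓝[S] x₀) (𝓝 0) := by
    simpa using ((hg x₀ hx₀).tendsto.dist (tendsto_const_nhds (x := g x₀))).add
      ((hcont (g x₀) x₀ hx₀).tendsto.dist (tendsto_const_nhds (x := T x₀ (g x₀))))
  refine squeeze_zero' (Eventually.of_forall fun _ => dist_nonneg) ?_ hsplit
  filter_upwards [self_mem_nhdsWithin] with x hx
  calc dist (T x (g x)) (T x₀ (g x₀))
      ≤ dist (T x (g x)) (T x (g x₀)) + dist (T x (g x₀)) (T x₀ (g x₀)) := dist_triangle _ _ _
    _ ≤ dist (g x) (g x₀) + dist (T x (g x₀)) (T x₀ (g x₀)) := by gcongr; exact hT x hx _ _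

end

theorem tendstoUniformly_apply_add_of_continuousOn {E : Type*} [SeminormedAddCommGroup E]
    {Φ : ℝ × ℝ → E} {g : ℝ → E} (hΦ : ContinuousOn Φ {p | p.1 ≤ p.2})
    (hdiag : ∀ s, Φ (s, s) = g s) (hle : ∀ s t, s ≤ t → ‖Φ (s, t)‖ ≤ ‖g t‖)
    (hg : Tendsto g (cocompact ℝ) (𝓝 0)) :
    TendstoUniformly (fun t s => Φ (s, s + t)) g (𝓝[≥] 0) := by
  set ψ : ℝ × Set.Icc (0 : ℝ) 1 → E := fun q => Φ (q.1 - q.2, q.1)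
  have hψ_cont : Continuous ψ :=
    hΦ.comp_continuous (by fun_prop) fun q => by simpa using q.2.2.1
  have hψ_zero : Tendsto ψ (cocompact _) (𝓝 0) := by
    refine squeeze_zero_norm' (Eventually.of_forall fun q => hle _ _ (by simpa using q.2.2.1)) ?_
    simpa using
      (hg.comp (isProperMap_iff_tendsto_cocompact.mp isProperMap_fst_of_compactSpace).2).norm
  rw [Metric.tendstoUniformly_iff]
  intro ε hε
  obtain ⟨δ, hδ, hψδ⟩ :=
    Metric.uniformContinuous_iff.mp (hψ_cont.uniformContinuous_of_tendsto_cocompact hψ_zero) ε hε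
  filter_upwards [Ico_mem_nhdsGE (lt_min hδ one_pos)] with t ⟨ht₀, htδ⟩ s
  have ht : t ∈ Set.Icc (0 : ℝ) 1 := ⟨ht₀, htδ.le.trans (min_le_right _ _)⟩
  have hdist : dist ((s, ⟨0, by simp⟩) : ℝ × Set.Icc (0 : ℝ) 1) (s + t, ⟨t, ht⟩) < δ := by
    rw [Prod.dist_eq, Subtype.dist_eq, dist_comm, Real.dist_eq, Real.dist_eq]
    simpa [abs_of_nonneg ht₀] using htδ.trans_le (min_le_left _ _)
  simpa [ψ, hdiag] using hψδ hdist

namespace IsFellerEvolution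

variable {d : ℕ}
  {U : ℝ → ℝ → (EuclideanSpace ℝ (Fin d) →C₀ ℝ) →ₗ[ℝ] (EuclideanSpace ℝ (Fin d) →C₀ ℝ)}

theorem dist_apply_le (hU : IsFellerEvolution U) {s t : ℝ} (hst : s ≤ t)
    (u v : EuclideanSpace ℝ (Fin d) →C₀ ℝ) : dist (U s t u) (U s t v) ≤ dist u v := by
  simpa only [dist_eq_norm, map_sub] using hU.1 s t hst (u - v)

theorem continuousOn_apply_timeSlice (hU : IsFellerEvolution U)
    (f : (ℝ × EuclideanSpace ℝ (Fin d)) →C₀ ℝ) :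
    ContinuousOn (fun p : ℝ × ℝ => U p.1 p.2 (timeSlice f p.2)) {p | p.1 ≤ p.2} := by
  refine ContinuousOn.apply_of_dist_le (fun p hp => hU.dist_apply_le hp) (fun v p hp => ?_)
    ((uniformContinuous_timeSlice f).continuous.comp continuous_snd).continuousOn
  rw [ContinuousWithinAt, tendsto_iff_norm_sub_tendsto_zero]
  exact hU.2.2.2.2 v p.1 p.2 hp

end IsFellerEvolution

theorem spaceTime_strongly_continuous_general
    (d : ℕ)
    (U : ℝ → ℝ → (EuclideanSpace ℝ (Fin d) →C₀ ℝ) →ₗ[ℝ] (EuclideanSpace ℝ (Fin d) →C₀ ℝ))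
    (hU : IsFellerEvolution U)
    (f : (ℝ × EuclideanSpace ℝ (Fin d)) →C₀ ℝ) :
    ∀ ε > (0:ℝ), ∃ δ > (0:ℝ), ∀ t, 0 < t → t < δ →
      ∀ p : ℝ × EuclideanSpace ℝ (Fin d), |spaceTime U t f p - f p| < ε := by
  intro ε hε
  have hunif := tendstoUniformly_apply_add_of_continuousOn (hU.continuousOn_apply_timeSlice f)
    (fun s => by rw [hU.2.2.1 s]; rfl) (fun s t hst => hU.1 s t hst _)
    (tendsto_timeSlice_cocompact f)
  obtain ⟨δ, hδ, hδε⟩ :=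
    mem_nhdsGE_iff_exists_Ico_subset.mp (Metric.tendstoUniformly_iff.mp hunif ε hε)
  refine ⟨δ, hδ, fun t ht htδ p => ?_⟩
  calc |spaceTime U t f p - f p|
      = dist (timeSlice f p.1 p.2) (U p.1 (p.1 + t) (timeSlice f (p.1 + t)) p.2) := by
        rw [dist_comm, Real.dist_eq]; rfl
    _ ≤ dist (timeSlice f p.1) (U p.1 (p.1 + t) (timeSlice f (p.1 + t))) :=
        ZeroAtInftyContinuousMap.dist_coe_le_dist _ _ _
    _ < ε := hδε ⟨ht.le, htδ⟩ p.1

/-- If `U` is a Feller evolution system on `C₀(ℝ^d)`, then the space-time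
semigroup `T(t)f(s,x) = (U(s,s+t)f(s+t,·))(x)` is strongly continuous at `t = 0` on
`C₀(ℝ × ℝ^d)`: `sup_{(s,x)} |T(t)f(s,x) - f(s,x)| → 0` as `t ↓ 0`. -/
theorem spaceTime_strongly_continuous
    (d : ℕ) (hd : 1 ≤ d)
    (U : ℝ → ℝ → (EuclideanSpace ℝ (Fin d) →C₀ ℝ) →ₗ[ℝ] (EuclideanSpace ℝ (Fin d) →C₀ ℝ))
    (hU : IsFellerEvolution U)
    (f : (ℝ × EuclideanSpace ℝ (Fin d)) →C₀ ℝ) :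
    ∀ ε > (0:ℝ), ∃ δ > (0:ℝ), ∀ t, 0 < t → t < δ →
      ∀ p : ℝ × EuclideanSpace ℝ (Fin d), |spaceTime U t f p - f p| < ε :=
  spaceTime_strongly_continuous_general d U hU f
end

section
/- Let d ≥ 1 and let (U(s,t))_{s,t∈ℝ, s≤t} be linear operators on the space of bounded real-valued functions on ℝ^d that are positivity preserving (f ≥ 0 implies U(s,t)f ≥ 0), sup-norm contractions (‖U(s,t)f‖_∞ ≤ ‖f‖_∞), and satisfy U(s,s) = id and U(s,t) = U(s,r)∘U(r,t) for s ≤ r ≤ t. Define T(t)f(s,x) := (U(s,s+t) f(s+t,·))(x) for bounded f : ℝ × ℝ^d → ℝ. Suppose that for every t ≥ 0, T(t) maps C₀(ℝ × ℝ^d) into itself and that lim_{t↓0} ‖T(t)f − f‖_∞ = 0 for every f ∈ C₀(ℝ × ℝ^d). Then (U(s,t)) restricted to C₀(ℝ^d) is a Feller evolution system; in particular, U(s,t) maps C₀(ℝ^d) into C₀(ℝ^d) and for every g ∈ C₀(ℝ^d) and every v ≤ w one has ‖U(s,t)g − U(v,w)g‖_∞ → 0 as (s,t) → (v,w) with s ≤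 t. -/
/-!
For `g ∈ C₀(ℝ^d)` and `φ ∈ C₀(ℝ)` with `φ t = 1`, the space-time operator recovers the evolution
from the product function `φ ⊗ g`: `T(t - s)(φ ⊗ g)(s, ·) = U(s,t) g`. So `U(s,t) g` is a slice of
the `C₀(ℝ × ℝ^d)` function `T(t - s)(φ ⊗ g)`, hence lies in `C₀(ℝ^d)`. Taking `φ = 1` near `w`,
`U(s,t) g - U(v,w) g` splits into `T(t - s)(φ ⊗ g) - T(w - v)(φ ⊗ g)` at time `s`, small because
`T(a + b) = T(a) T(b)` and contractivity upgrade strong continuity at `0` to uniform continuity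
in time, plus the variation in `s` of the uniformly continuous function `T(w - v)(φ ⊗ g)`.
-/

open Filter Topology
open scoped ZeroAtInfty

/-- A function is bounded if `|f y| ≤ M` for some `M`. -/
def IsBdd {α : Type*} (f : α → ℝ) : Prop := ∃ M : ℝ, ∀ y, |f y| ≤ M

/-- The space-time operators `T(t)f(s,x) := (U(s,s+t) f(s+t,·))(x)` on plain functions. -/
noncomputable def spaceTimeOp (d : ℕ)
    (U : ℝ → ℝ → (EuclideanSpace ℝ (Fin d) → ℝ) →ₗ[ℝ] (EuclideanSpace ℝ (Fin d) → ℝ))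
    (t : ℝ) (f : ℝ × EuclideanSpace ℝ (Fin d) → ℝ) :
    ℝ × EuclideanSpace ℝ (Fin d) → ℝ :=
  fun p => U p.1 (p.1 + t) (fun y => f (p.1 + t, y)) p.2

open scoped CompactlySupported

namespace ZeroAtInftyContinuousMap

variable {X Y α : Type*} [TopologicalSpace X] [TopologicalSpace Y]

lemma isBdd (f : C₀(X, ℝ)) : IsBdd f :=
  ⟨‖f.toBCF‖, f.toBCF.norm_coe_le_norm⟩

def prodMul [NormedRing α] (φ : C₀(X, α)) (g : C₀(Y, α)) : C₀(X × Y, α) where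
  toFun p := φ p.1 * g p.2
  continuous_toFun := by fun_prop
  zero_at_infty' := by
    have hφ : IsBoundedUnder (· ≤ ·) (comap Prod.snd (cocompact Y)) (fun p : X × Y => ‖φ p.1‖) :=
      isBoundedUnder_of ⟨‖φ.toBCF‖, fun p => φ.toBCF.norm_coe_le_norm p.1⟩
    have hg : IsBoundedUnder (· ≤ ·) (comap Prod.fst (cocompact X)) (fun p : X × Y => ‖g p.2‖) :=
      isBoundedUnder_of ⟨‖g.toBCF‖, fun p => g.toBCF.norm_coe_le_norm p.2⟩
    rw [← coprod_cocompact]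
    exact (((zero_at_infty φ).comp tendsto_comap).zero_mul_isBoundedUnder_le hg).sup
      (isBoundedUnder_le_mul_tendsto_zero hφ ((zero_at_infty g).comp tendsto_comap))

@[simp]
lemma prodMul_apply [NormedRing α] (φ : C₀(X, α)) (g : C₀(Y, α)) (p : X × Y) :
    φ.prodMul g p = φ p.1 * g p.2 := rfl

def sliceAt [Zero α] [TopologicalSpace α] (G : C₀(X × Y, α)) (x : X) : C₀(Y, α) where
  toFun y := G (x, y)
  continuous_toFun := by fun_prop
  zero_at_infty' := by
    have : Tendsto (Prod.mk x) (cocompact Y) (cocompact (X × Y)) := by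
      rw [← coprod_cocompact]
      exact le_sup_of_le_right (tendsto_comap_iff.2 tendsto_id)
    exact (zero_at_infty G).comp this

end ZeroAtInftyContinuousMap

lemma exists_zeroAtInfty_eqOn_one {X : Type*} [TopologicalSpace X] [RegularSpace X]
    [LocallyCompactSpace X] {K : Set X} (hK : IsCompact K) :
    ∃ φ : C₀(X, ℝ), Set.EqOn φ 1 K := by
  obtain ⟨φ, hφK, -, hφc, -⟩ := exists_continuous_one_zero_of_isCompact hK isClosed_empty
    (Set.disjoint_empty K)
  exact ⟨(⟨φ, hφc⟩ : C_c(X, ℝ)), hφK⟩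

section Evolution

variable {E : Type*}

def IsSupContraction (U : ℝ → ℝ → (E → ℝ) →ₗ[ℝ] (E → ℝ)) : Prop :=
  ∀ s t, s ≤ t → ∀ (g : E → ℝ) (M : ℝ), (∀ x, |g x| ≤ M) → ∀ x, |U s t g x| ≤ M

def IsEvolution (U : ℝ → ℝ → (E → ℝ) →ₗ[ℝ] (E → ℝ)) : Prop :=
  ∀ s r t, s ≤ r → r ≤ t → ∀ g : E → ℝ, IsBdd g → U s t g = U s r (U r t g)

end Evolution

section SpaceTime

variable {d : ℕ} {U : ℝ → ℝ → (EuclideanSpace ℝ (Fin d) → ℝ) →ₗ[ℝ] (EuclideanSpace ℝ (Fin d) → ℝ)}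

lemma spaceTimeOp_sub_apply (t : ℝ) (F G : ℝ × EuclideanSpace ℝ (Fin d) → ℝ) (p) :
    spaceTimeOp d U t (F - G) p = spaceTimeOp d U t F p - spaceTimeOp d U t G p := by
  simp only [spaceTimeOp, Pi.sub_apply]
  exact congrFun (map_sub (U p.1 (p.1 + t)) _ _) p.2

lemma spaceTimeOp_add (hev : IsEvolution U) {a b : ℝ} (ha : 0 ≤ a) (hb : 0 ≤ b)
    {F : ℝ × EuclideanSpace ℝ (Fin d) → ℝ} (hF : IsBdd F) :
    spaceTimeOp d U (a + b) F = spaceTimeOp d U a (spaceTimeOp d U b F) := by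
  funext p
  obtain ⟨M, hM⟩ := hF
  simp only [spaceTimeOp, ← add_assoc]
  rw [hev p.1 (p.1 + a) (p.1 + a + b) (by linarith) (by linarith) _ ⟨M, fun y => hM _⟩]

lemma abs_spaceTimeOp_sub_le_of_le (hcontr : IsSupContraction U) (hev : IsEvolution U)
    {F : ℝ × EuclideanSpace ℝ (Fin d) → ℝ} (hF : IsBdd F) {τ₀ τ ε : ℝ} (hτ₀ : 0 ≤ τ₀)
    (hτ : τ₀ ≤ τ) (hε : ∀ p, |spaceTimeOp d U (τ - τ₀) F p - F p| ≤ ε) (p) :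
    |spaceTimeOp d U τ F p - spaceTimeOp d U τ₀ F p| ≤ ε := by
  rw [← add_sub_cancel τ₀ τ, spaceTimeOp_add hev hτ₀ (sub_nonneg.2 hτ) hF,
    ← spaceTimeOp_sub_apply]
  exact hcontr _ _ (by linarith) _ ε (fun y => hε _) p.2

lemma spaceTimeOp_uniformly_continuous_in_time (hcontr : IsSupContraction U) (hev : IsEvolution U)
    {F : ℝ × EuclideanSpace ℝ (Fin d) → ℝ} (hF : IsBdd F)
    (hF₀ : ∀ ε > (0:ℝ), ∃ δ > (0:ℝ), ∀ t, 0 < t → t < δ → ∀ p,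
      |spaceTimeOp d U t F p - F p| ≤ ε) {ε : ℝ} (hε : 0 < ε) :
    ∃ δ > (0:ℝ), ∀ τ₀ τ, 0 ≤ τ₀ → 0 ≤ τ → |τ - τ₀| < δ → ∀ p,
      |spaceTimeOp d U τ F p - spaceTimeOp d U τ₀ F p| ≤ ε := by
  obtain ⟨δ, hδ, hF₀⟩ := hF₀ ε hε
  have of_le {τ₀ τ : ℝ} (hτ₀ : 0 ≤ τ₀) (hτ : τ₀ ≤ τ) (hδτ : τ - τ₀ < δ) (p) :
      |spaceTimeOp d U τ F p - spaceTimeOp d U τ₀ F p| ≤ ε := by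
    rcases hτ.eq_or_lt with rfl | hlt
    · simpa using hε.le
    · exact abs_spaceTimeOp_sub_le_of_le hcontr hev hF hτ₀ hτ (hF₀ _ (sub_pos.2 hlt) hδτ) p
  refine ⟨δ, hδ, fun τ₀ τ hτ₀ hτ hτδ p => ?_⟩
  rcases le_total τ₀ τ with h | h
  · exact of_le hτ₀ h (lt_of_abs_lt hτδ) p
  · rw [abs_sub_comm]
    exact of_le hτ h (lt_of_abs_lt (abs_sub_comm τ τ₀ ▸ hτδ)) p

lemma spaceTimeOp_prodMul_apply {φ : C₀(ℝ, ℝ)} {t : ℝ} (hφ : φ t = 1)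
    (g : C₀(EuclideanSpace ℝ (Fin d), ℝ)) (s : ℝ) (x : EuclideanSpace ℝ (Fin d)) :
    spaceTimeOp d U (t - s) (φ.prodMul g) (s, x) = U s t g x := by
  simp [spaceTimeOp, hφ]

lemma exists_zeroAtInfty_eq_evolution
    (hTmaps : ∀ t, 0 ≤ t → ∀ f : (ℝ × EuclideanSpace ℝ (Fin d)) →C₀ ℝ,
      ∃ g : (ℝ × EuclideanSpace ℝ (Fin d)) →C₀ ℝ, ∀ p, g p = spaceTimeOp d U t (⇑f) p)
    {s t : ℝ} (hst : s ≤ t) (g : EuclideanSpace ℝ (Fin d) →C₀ ℝ) :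
    ∃ g' : EuclideanSpace ℝ (Fin d) →C₀ ℝ, ∀ x, g' x = U s t (⇑g) x := by
  obtain ⟨φ, hφ⟩ := exists_zeroAtInfty_eqOn_one (isCompact_singleton (x := t))
  obtain ⟨G, hG⟩ := hTmaps (t - s) (sub_nonneg.2 hst) (φ.prodMul g)
  exact ⟨G.sliceAt s, fun x => (hG (s, x)).trans (spaceTimeOp_prodMul_apply (hφ rfl) g s x)⟩

lemma evolution_jointly_continuous (hcontr : IsSupContraction U) (hev : IsEvolution U)
    (hTmaps : ∀ t, 0 ≤ t → ∀ f : (ℝ × EuclideanSpace ℝ (Fin d)) →C₀ ℝ,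
      ∃ g : (ℝ × EuclideanSpace ℝ (Fin d)) →C₀ ℝ, ∀ p, g p = spaceTimeOp d U t (⇑f) p)
    (hTcont : ∀ f : (ℝ × EuclideanSpace ℝ (Fin d)) →C₀ ℝ, ∀ ε > (0:ℝ), ∃ δ > (0:ℝ),
      ∀ t, 0 < t → t < δ → ∀ p, |spaceTimeOp d U t (⇑f) p - f p| ≤ ε)
    (g : EuclideanSpace ℝ (Fin d) →C₀ ℝ) {v w : ℝ} (hvw : v ≤ w) {ε : ℝ} (hε : 0 < ε) :
    ∃ δ > (0:ℝ), ∀ s t : ℝ, s ≤ t → |s - v| < δ → |t - w| < δ →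
      ∀ x, |U s t (⇑g) x - U v w (⇑g) x| ≤ ε := by
  obtain ⟨φ, hφ⟩ := exists_zeroAtInfty_eqOn_one (isCompact_Icc (a := w - 1) (b := w + 1))
  set f := φ.prodMul g
  obtain ⟨δ₁, hδ₁, hTf⟩ := spaceTimeOp_uniformly_continuous_in_time hcontr hev f.isBdd (hTcont f)
    (half_pos hε)
  obtain ⟨G, hG⟩ := hTmaps (w - v) (sub_nonneg.2 hvw) f
  obtain ⟨δ₂, hδ₂, hGunif⟩ :=
    Metric.uniformContinuous_iff.mp (ZeroAtInftyContinuousMap.uniformContinuous G) _ (half_pos hε)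
  refine ⟨min 1 (min δ₂ (δ₁ / 2)), by positivity, fun s t hst hsv htw x => ?_⟩
  simp only [lt_min_iff] at hsv htw
  have htw₁ := abs_lt.1 htw.1
  have hφt : φ t = 1 := hφ ⟨by linarith [htw₁.1], by linarith [htw₁.2]⟩
  have hφw : φ w = 1 := hφ ⟨by linarith, by linarith⟩
  have hτ : |(t - s) - (w - v)| < δ₁ := by
    calc |(t - s) - (w - v)| = |(t - w) - (s - v)| := by ring_nf
      _ ≤ |t - w| + |s - v| := abs_sub _ _
      _ < δ₁ := by linarith [htw.2.2, hsv.2.2]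
  have hGsv : |G (s, x) - G (v, x)| ≤ ε / 2 := by
    have hdist : dist (s, x) (v, x) < δ₂ := by
      simpa [Prod.dist_eq, Real.dist_eq] using hsv.2.1
    exact (Real.dist_eq _ _ ▸ hGunif hdist).le
  have hU {a b : ℝ} (hb : φ b = 1) : U a b g x = spaceTimeOp d U (b - a) f (a, x) :=
    (spaceTimeOp_prodMul_apply hb g a x).symm
  rw [hU hφt, hU hφw, ← hG (v, x)]
  calc _ = |(spaceTimeOp d U (t - s) f (s, x) - spaceTimeOp d U (w - v) f (s, x))
        + (G (s, x) - G (v, x))| := by rw [hG (s, x)]; ring_nf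
    _ ≤ ε / 2 + ε / 2 := (abs_add_le _ _).trans
        (add_le_add (hTf _ _ (sub_nonneg.2 hvw) (sub_nonneg.2 hst) hτ _) hGsv)
    _ = ε := add_halves ε

end SpaceTime

theorem feller_evolution_of_spaceTime_feller_general
    (d : ℕ)
    (U : ℝ → ℝ → (EuclideanSpace ℝ (Fin d) → ℝ) →ₗ[ℝ] (EuclideanSpace ℝ (Fin d) → ℝ))
    (hcontr : ∀ s t, s ≤ t → ∀ (g : EuclideanSpace ℝ (Fin d) → ℝ) (M : ℝ),
      (∀ x, |g x| ≤ M) → ∀ x, |U s t g x| ≤ M)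
    (hev : ∀ s r t, s ≤ r → r ≤ t → ∀ g : EuclideanSpace ℝ (Fin d) → ℝ, IsBdd g →
      U s t g = U s r (U r t g))
    -- T(t) maps C₀(ℝ × ℝ^d) into itself
    (hTmaps : ∀ t, 0 ≤ t → ∀ f : (ℝ × EuclideanSpace ℝ (Fin d)) →C₀ ℝ,
      ∃ g : (ℝ × EuclideanSpace ℝ (Fin d)) →C₀ ℝ, ∀ p, g p = spaceTimeOp d U t (⇑f) p)
    -- T(t) is strongly continuous at 0 on C₀(ℝ × ℝ^d)
    (hTcont : ∀ f : (ℝ × EuclideanSpace ℝ (Fin d)) →C₀ ℝ, ∀ ε > (0:ℝ), ∃ δ > (0:ℝ),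
      ∀ t, 0 < t → t < δ → ∀ p, |spaceTimeOp d U t (⇑f) p - f p| ≤ ε) :
    -- U(s,t) maps C₀(ℝ^d) into itself
    (∀ s t, s ≤ t → ∀ g : EuclideanSpace ℝ (Fin d) →C₀ ℝ,
      ∃ g' : EuclideanSpace ℝ (Fin d) →C₀ ℝ, ∀ x, g' x = U s t (⇑g) x) ∧
    -- joint strong continuity of (s,t) ↦ U(s,t)g on {s ≤ t}
    (∀ g : EuclideanSpace ℝ (Fin d) →C₀ ℝ, ∀ v w : ℝ, v ≤ w → ∀ ε > (0:ℝ), ∃ δ > (0:ℝ),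
      ∀ s t : ℝ, s ≤ t → |s - v| < δ → |t - w| < δ →
        ∀ x, |U s t (⇑g) x - U v w (⇑g) x| ≤ ε) :=
  ⟨fun _ _ hst g => exists_zeroAtInfty_eq_evolution hTmaps hst g,
    fun g _ _ hvw _ hε => evolution_jointly_continuous hcontr hev hTmaps hTcont g hvw hε⟩

/-- Let `U(s,t)`, `s ≤ t`, be positivity-preserving sup-norm contractions
on the bounded functions on `ℝ^d` with `U(s,s) = id` and the evolution property. If the
space-time operators `T(t)` map `C₀(ℝ × ℝ^d)` into itself and are strongly continuous at
`t = 0`, then `U` restricted to `C₀(ℝ^d)` is a Feller evolution system: in particular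
`U(s,t)` maps `C₀(ℝ^d)` into `C₀(ℝ^d)` and `(s,t) ↦ U(s,t)g` is jointly strongly
continuous on `{s ≤ t}`. -/
theorem feller_evolution_of_spaceTime_feller
    (d : ℕ) (hd : 1 ≤ d)
    (U : ℝ → ℝ → (EuclideanSpace ℝ (Fin d) → ℝ) →ₗ[ℝ] (EuclideanSpace ℝ (Fin d) → ℝ))
    (hpos : ∀ s t, s ≤ t → ∀ g : EuclideanSpace ℝ (Fin d) → ℝ,
      (∀ x, 0 ≤ g x) → ∀ x, 0 ≤ U s t g x)
    (hcontr : ∀ s t, s ≤ t → ∀ (g : EuclideanSpace ℝ (Fin d) → ℝ) (M : ℝ),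
      (∀ x, |g x| ≤ M) → ∀ x, |U s t g x| ≤ M)
    (hid : ∀ s, ∀ g : EuclideanSpace ℝ (Fin d) → ℝ, IsBdd g → U s s g = g)
    (hev : ∀ s r t, s ≤ r → r ≤ t → ∀ g : EuclideanSpace ℝ (Fin d) → ℝ, IsBdd g →
      U s t g = U s r (U r t g))
    -- T(t) maps C₀(ℝ × ℝ^d) into itself
    (hTmaps : ∀ t, 0 ≤ t → ∀ f : (ℝ × EuclideanSpace ℝ (Fin d)) →C₀ ℝ,
      ∃ g : (ℝ × EuclideanSpace ℝ (Fin d)) →C₀ ℝ, ∀ p, g p = spaceTimeOp d U t (⇑f) p)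
    -- T(t) is strongly continuous at 0 on C₀(ℝ × ℝ^d)
    (hTcont : ∀ f : (ℝ × EuclideanSpace ℝ (Fin d)) →C₀ ℝ, ∀ ε > (0:ℝ), ∃ δ > (0:ℝ),
      ∀ t, 0 < t → t < δ → ∀ p, |spaceTimeOp d U t (⇑f) p - f p| ≤ ε) :
    -- U(s,t) maps C₀(ℝ^d) into itself
    (∀ s t, s ≤ t → ∀ g : EuclideanSpace ℝ (Fin d) →C₀ ℝ,
      ∃ g' : EuclideanSpace ℝ (Fin d) →C₀ ℝ, ∀ x, g' x = U s t (⇑g) x) ∧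
    -- joint strong continuity of (s,t) ↦ U(s,t)g on {s ≤ t}
    (∀ g : EuclideanSpace ℝ (Fin d) →C₀ ℝ, ∀ v w : ℝ, v ≤ w → ∀ ε > (0:ℝ), ∃ δ > (0:ℝ),
      ∀ s t : ℝ, s ≤ t → |s - v| < δ → |t - w| < δ →
        ∀ x, |U s t (⇑g) x - U v w (⇑g) x| ≤ ε) :=
  feller_evolution_of_spaceTime_feller_general d U hcontr hev hTmaps hTcont
end

section
/- Let d ≥ 1 and let (U(s,t))_{s≤t} be a Feller evolution system on C₀(ℝ^d), with space-time semigroup T(t)f(s,x) := (U(s,s+t) f(s+t,·))(x) on C₀(ℝ × ℝ^d). Let f ∈ C₀(ℝ × ℝ^d) be such that: (i) for every x ∈ ℝ^d the map s ↦ f(s,x) is differentiable, the partial derivative ∂₁f is bounded and uniformly continuous on ℝ × ℝ^d, and ∂₁f(s,·) ∈ C₀(ℝ^d) for every s; (ii) for every s ∈ ℝ the function f(s,·) belongs to the domain of the right generator A_s^+ of U, i.e. there exists g_s ∈ C₀(ℝ^d) with ‖(U(s,s+h)f(s,·) − f(s,·))/h − g_s‖_∞ → 0 as h↓0. Then for every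 (s,x) ∈ ℝ × ℝ^d, lim_{t↓0} (T(t)f(s,x) − f(s,x))/t = ∂₁f(s,x) + g_s(x); i.e., the extended pointwise generator L of the space-time semigroup satisfies Lf(s,x) = ∂f/∂s(s,x) + A_s^+[f(s,·)](x). -/
/-!
Write `T(t)f(s,·) - f(s,·) = U(s,s+t)[f(s+t,·) - f(s,·) - t ∂₁f(s,·)] + t U(s,s+t)∂₁f(s,·)
+ [U(s,s+t)f(s,·) - f(s,·)]`. Divided by `t`, the first term tends to `0` in norm because
`U(s,s+t)` is a contraction and, by the mean value theorem and the uniform continuity of `∂₁f`,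
the time difference quotients of `f` converge to `∂₁f(s,·)` uniformly in space; the second tends
to `∂₁f(s,·)` by strong continuity of `U`, and the third to `A_s⁺ f(s,·)`. The convergence thus
even holds in `C₀(ℝ^d)`, and evaluating at `x` gives the claim.
-/

open Filter Topology
open scoped ZeroAtInfty

theorem tendstoUniformly_slope_of_uniformContinuous {X : Type*} [PseudoMetricSpace X]
    {f f' : ℝ × X → ℝ} (hderiv : ∀ s x, HasDerivAt (fun r => f (r, x)) (f' (s, x)) s)
    (hf' : UniformContinuous f') (s : ℝ) :
    TendstoUniformly (fun t y => t⁻¹ * (f (s + t, y) - f (s, y))) (fun y => f' (s, y))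
      (𝓝[>] 0) := by
  rw [Metric.tendstoUniformly_iff]
  intro ε hε
  obtain ⟨δ, hδ, hδε⟩ := Metric.uniformContinuous_iff.1 hf' ε hε
  filter_upwards [Ioo_mem_nhdsGT hδ] with t ⟨ht0, htδ⟩ y
  obtain ⟨c, ⟨hsc, hct⟩, hc⟩ := exists_hasDerivAt_eq_slope (fun r => f (r, y))
    (fun r => f' (r, y)) (lt_add_of_pos_right s ht0)
    (fun r _ => (hderiv r y).continuousAt.continuousWithinAt) (fun r _ => hderiv r y)
  have hslope : t⁻¹ * (f (s + t, y) - f (s, y)) = f' (c, y) := by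
    rw [hc, add_sub_cancel_left, inv_mul_eq_div]
  rw [hslope]
  refine hδε ?_
  rw [Prod.dist_eq, dist_self, max_eq_left dist_nonneg, Real.dist_eq, abs_sub_lt_iff]
  constructor <;> linarith

theorem tendsto_inv_smul_apply_sub_of_contraction {E : Type*} [NormedAddCommGroup E]
    [NormedSpace ℝ E] {l : Filter ℝ} {V : ℝ → E →ₗ[ℝ] E} (hV : ∀ᶠ t in l, ∀ v, ‖V t v‖ ≤ ‖v‖)
    {a b c : E} {a' : ℝ → E} (ha' : Tendsto (fun t => t⁻¹ • (a' t - a)) l (𝓝 c))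
    (hVc : Tendsto (fun t => V t c) l (𝓝 c))
    (hVa : Tendsto (fun t => t⁻¹ • (V t a - a)) l (𝓝 b)) :
    Tendsto (fun t => t⁻¹ • (V t (a' t) - a)) l (𝓝 (c + b)) := by
  have hsplit : ∀ t, t⁻¹ • (V t (a' t) - a) =
      V t (t⁻¹ • (a' t - a) - c) + (V t c + t⁻¹ • (V t a - a)) := by
    intro t
    simp only [map_sub, map_smul, smul_sub]
    abel
  have hsmall : Tendsto (fun t => V t (t⁻¹ • (a' t - a) - c)) l (𝓝 0) :=
    squeeze_zero_norm' (hV.mono fun t ht => ht _) (tendsto_iff_norm_sub_tendsto_zero.1 ha')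
  simpa [hsplit] using hsmall.add (hVc.add hVa)

namespace IsFellerEvolution

variable {d : ℕ}
  {U : ℝ → ℝ → (EuclideanSpace ℝ (Fin d) →C₀ ℝ) →ₗ[ℝ] (EuclideanSpace ℝ (Fin d) →C₀ ℝ)}

theorem eventually_norm_apply_le (hU : IsFellerEvolution U) (s : ℝ) :
    ∀ᶠ t in 𝓝[>] (0 : ℝ), ∀ h, ‖U s (s + t) h‖ ≤ ‖h‖ := by
  filter_upwards [self_mem_nhdsWithin] with t ht
  exact hU.1 s (s + t) (le_add_of_nonneg_right (le_of_lt ht))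

theorem tendsto_apply_nhdsGT (hU : IsFellerEvolution U) (s : ℝ)
    (h : EuclideanSpace ℝ (Fin d) →C₀ ℝ) :
    Tendsto (fun t => U s (s + t) h) (𝓝[>] (0 : ℝ)) (𝓝 h) := by
  have hpath : Tendsto (fun t : ℝ => (s, s + t)) (𝓝[>] (0 : ℝ))
      (𝓝[{p : ℝ × ℝ | p.1 ≤ p.2}] (s, s)) := by
    refine tendsto_nhdsWithin_of_tendsto_nhds_of_eventually_within _ ?_ ?_
    · have hcont : Continuous fun t : ℝ => (s, s + t) := by fun_prop
      simpa using hcont.continuousWithinAt.tendsto (s := Set.Ioi 0) (x := 0)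
    · filter_upwards [self_mem_nhdsWithin] with t ht
      exact le_add_of_nonneg_right (le_of_lt ht)
  have hid : U s s h = h := by rw [hU.2.2.1 s]; rfl
  rw [tendsto_iff_norm_sub_tendsto_zero]
  simpa [Function.comp_def, hid] using (hU.2.2.2.2 h s s le_rfl).comp hpath

end IsFellerEvolution

theorem spaceTime_pointwise_generator_general
    (d : ℕ)
    (U : ℝ → ℝ → (EuclideanSpace ℝ (Fin d) →C₀ ℝ) →ₗ[ℝ] (EuclideanSpace ℝ (Fin d) →C₀ ℝ))
    (hU : IsFellerEvolution U)
    (f : (ℝ × EuclideanSpace ℝ (Fin d)) →C₀ ℝ)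
    (f' : ℝ × EuclideanSpace ℝ (Fin d) → ℝ)
    -- (i): s ↦ f(s,x) is differentiable with derivative ∂₁f = f'
    (hderiv : ∀ (s : ℝ) (x : EuclideanSpace ℝ (Fin d)),
      HasDerivAt (fun r : ℝ => f (r, x)) (f' (s, x)) s)
    (hucont : UniformContinuous f')
    (hslice : ∀ s : ℝ, ∃ h : EuclideanSpace ℝ (Fin d) →C₀ ℝ, ∀ x, h x = f' (s, x))
    -- (ii): f(s,·) lies in the domain of the right generator A_s⁺, with A_s⁺ f(s,·) = g s
    (g : ℝ → (EuclideanSpace ℝ (Fin d) →C₀ ℝ))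
    (hgen : ∀ s : ℝ, Tendsto
      (fun h : ℝ => ‖h⁻¹ • (U s (s + h) (timeSlice f s) - timeSlice f s) - g s‖)
      (𝓝[>] (0:ℝ)) (𝓝 0)) :
    ∀ (s : ℝ) (x : EuclideanSpace ℝ (Fin d)),
      Tendsto (fun t : ℝ => (spaceTime U t f (s, x) - f (s, x)) / t)
        (𝓝[>] (0:ℝ)) (𝓝 (f' (s, x) + g s x)) := by
  intro s x
  obtain ⟨fs', hfs'⟩ := hslice s
  have hslope : Tendsto (fun t => t⁻¹ • (timeSlice f (s + t) - timeSlice f s))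
      (𝓝[>] (0 : ℝ)) (𝓝 fs') := by
    rw [ZeroAtInftyContinuousMap.tendsto_iff_tendstoUniformly]
    rw [show ⇑fs' = fun y => f' (s, y) from funext hfs']
    exact tendstoUniformly_slope_of_uniformContinuous hderiv hucont s
  have hnorm := tendsto_inv_smul_apply_sub_of_contraction (hU.eventually_norm_apply_le s)
    hslope (hU.tendsto_apply_nhdsGT s fs') (tendsto_iff_norm_sub_tendsto_zero.2 (hgen s))
  have hx := (ZeroAtInftyContinuousMap.tendsto_iff_tendstoUniformly.1 hnorm).tendsto_at x
  rw [ZeroAtInftyContinuousMap.add_apply, hfs'] at hx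
  refine hx.congr fun t => ?_
  simp [spaceTime, timeSlice, div_eq_inv_mul]

/-- Pointwise generator formula for the space-time semigroup: if
`f ∈ C₀(ℝ × ℝ^d)` has a partial time derivative `∂₁f` which is bounded, uniformly
continuous and with slices in `C₀(ℝ^d)`, and every time slice `f(s,·)` lies in the domain
of the right generator `A_s⁺` of `U` (with `A_s⁺ f(s,·) = g s`), then
`lim_{t↓0} (T(t)f(s,x) - f(s,x))/t = ∂₁f(s,x) + (A_s⁺ f(s,·))(x)` for all `(s,x)`. -/
theorem spaceTime_pointwise_generator
    (d : ℕ) (hd : 1 ≤ d)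
    (U : ℝ → ℝ → (EuclideanSpace ℝ (Fin d) →C₀ ℝ) →ₗ[ℝ] (EuclideanSpace ℝ (Fin d) →C₀ ℝ))
    (hU : IsFellerEvolution U)
    (f : (ℝ × EuclideanSpace ℝ (Fin d)) →C₀ ℝ)
    (f' : ℝ × EuclideanSpace ℝ (Fin d) → ℝ)
    -- (i): s ↦ f(s,x) is differentiable with derivative ∂₁f = f'
    (hderiv : ∀ (s : ℝ) (x : EuclideanSpace ℝ (Fin d)),
      HasDerivAt (fun r : ℝ => f (r, x)) (f' (s, x)) s)
    (hbdd : ∃ M : ℝ, ∀ p, |f' p| ≤ M)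
    (hucont : UniformContinuous f')
    (hslice : ∀ s : ℝ, ∃ h : EuclideanSpace ℝ (Fin d) →C₀ ℝ, ∀ x, h x = f' (s, x))
    -- (ii): f(s,·) lies in the domain of the right generator A_s⁺, with A_s⁺ f(s,·) = g s
    (g : ℝ → (EuclideanSpace ℝ (Fin d) →C₀ ℝ))
    (hgen : ∀ s : ℝ, Tendsto
      (fun h : ℝ => ‖h⁻¹ • (U s (s + h) (timeSlice f s) - timeSlice f s) - g s‖)
      (𝓝[>] (0:ℝ)) (𝓝 0)) :
    ∀ (s : ℝ) (x : EuclideanSpace ℝ (Fin d)),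
      Tendsto (fun t : ℝ => (spaceTime U t f (s, x) - f (s, x)) / t)
        (𝓝[>] (0:ℝ)) (𝓝 (f' (s, x) + g s x)) :=
  spaceTime_pointwise_generator_general d U hU f f' hderiv hucont hslice g hgen
end

section
/- Let α, β > 0 and s₀ ∈ ℝ; define l : ℝ → ℝ by l(x) = α for x < s₀ and l(x) = β for x ≥ s₀, and let (φ_t)_{t≥0} be the flow of the ODE ẋ = l(x), explicitly: φ_t(x) = x + βt for x ≥ s₀, and for x < s₀, φ_t(x) = x + αt if x + αt ≤ s₀ and φ_t(x) = s₀ + β(t − (s₀ − x)/α) otherwise. Define T(t)f := f ∘ φ_t for f ∈ C₀(ℝ). Then: (a) (T(t))_{t≥0} is a Feller semigroup on C₀(ℝ) (each T(t) is a positivity-preserving linear contraction of C₀(ℝ) into itself, T(0) = id, T(t+r) = T(t)T(r), and ‖T(t)f − f‖_∞ → 0 as t↓0); (b) if f ∈ C₀(ℝ) is continuously differentiable with l·f′ ∈ C₀(ℝ) (which when α ≠ β forces f′(s₀) = 0), then f belongs to the domain of the generator L of T and Lf = l·f′, i.e. ‖(T(t)f − f)/t − l·f′‖_∞ → 0 as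 t↓0; (c) if α ≠ β and f ∈ C_c^∞(ℝ) satisfies f′(s₀) ≠ 0, then f does not belong to the domain of L; in particular C_c^∞(ℝ) is not contained in the domain of L. -/
open Filter Topology
open scoped ZeroAtInfty

section aux
variable {α β s₀ : ℝ} (hα : 0 < α) (hβ : 0 < β) {φ : ℝ → ℝ → ℝ}
  (hφ : ∀ t x, φ t x = if s₀ ≤ x then x + β * t else
      (if x + α * t ≤ s₀ then x + α * t else s₀ + β * (t - (s₀ - x) / α)))

include hα hβ hφ

lemma phi_formula (t : ℝ) (ht : 0 ≤ t) (x : ℝ) :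
    φ t x = x + α * min t (max ((s₀ - x)/α) 0) + β * (t - min t (max ((s₀ - x)/α) 0)) := by
  rw [hφ]
  rcases le_or_gt s₀ x with h | h
  · rw [if_pos h]
    have h1 : (s₀ - x)/α ≤ 0 := div_nonpos_of_nonpos_of_nonneg (by linarith) hα.le
    rw [max_eq_right h1, min_eq_right ht]; ring
  · rw [if_neg (not_le.2 h)]
    rcases le_or_gt (x + α * t) s₀ with h2 | h2
    · rw [if_pos h2]
      have hu : t ≤ (s₀ - x)/α := (le_div_iff₀ hα).2 (by linarith)
      rw [min_eq_left (hu.trans (le_max_left _ _))]; ring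
    · rw [if_neg (not_le.2 h2)]
      have hu0 : 0 ≤ (s₀ - x)/α := div_nonneg (by linarith) hα.le
      have hut : (s₀ - x)/α ≤ t := (div_le_iff₀ hα).2 (by linarith)
      rw [max_eq_left hu0, min_eq_right hut]
      field_simp
      ring

lemma phi_bound (t : ℝ) (ht : 0 ≤ t) (x : ℝ) :
    x ≤ φ t x ∧ φ t x ≤ x + max α β * t := by
  rw [phi_formula hα hβ hφ t ht x]
  set m := min t (max ((s₀ - x)/α) 0) with hm
  have hm0 : 0 ≤ m := le_min ht (le_max_right _ _)
  have hmt : m ≤ t := min_le_left _ _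
  constructor
  · nlinarith
  · nlinarith [le_max_left α β, le_max_right α β]

lemma phi_cont (t : ℝ) (ht : 0 ≤ t) : Continuous (fun x => φ t x) := by
  have : (fun x => φ t x) = fun x =>
      x + α * min t (max ((s₀ - x)/α) 0) + β * (t - min t (max ((s₀ - x)/α) 0)) := by
    funext x; exact phi_formula hα hβ hφ t ht x
  rw [this]; fun_prop

lemma phi_semigroup (t r : ℝ) (ht : 0 ≤ t) (hr : 0 ≤ r) (x : ℝ) :
    φ (t + r) x = φ r (φ t x) := by
  have hα' := hα.ne'
  rcases le_or_gt s₀ x with h | h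
  · have h1 : φ t x = x + β * t := by rw [hφ]; rw [if_pos h]
    have h2 : s₀ ≤ x + β * t := by nlinarith
    rw [hφ (t+r) x, if_pos h, h1, hφ, if_pos h2]; ring
  · rcases le_or_gt (x + α * t) s₀ with h2 | h2
    · have h1 : φ t x = x + α * t := by rw [hφ, if_neg (not_le.2 h), if_pos h2]
      rw [h1, hφ r (x + α * t), hφ (t+r) x, if_neg (not_le.2 h)]
      rcases le_or_gt s₀ (x + α * t) with h3 | h3
      · -- x + α t = s₀
        have he : x + α * t = s₀ := le_antisymm h2 h3
        rw [if_pos h3]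
        rcases le_or_gt (x + α * (t + r)) s₀ with h4 | h4
        · rw [if_pos h4]
          have : r = 0 := by nlinarith
          rw [this]; ring
        · rw [if_neg (not_le.2 h4)]
          have : (s₀ - x) / α = t := by field_simp; linarith
          rw [this, he]; ring
      · rw [if_neg (not_le.2 h3)]
        rcases le_or_gt (x + α * t + α * r) s₀ with h4 | h4
        · rw [if_pos h4, if_pos (by linarith : x + α * (t + r) ≤ s₀)]; ring
        · rw [if_neg (not_le.2 h4), if_neg (not_le.2 (by linarith : s₀ < x + α * (t + r)))]
          have hd : (s₀ - (x + α * t)) / α = (s₀ - x)/α - t := by field_simp; ring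
          rw [hd]; ring
    · have hu0 : 0 < s₀ - x := by linarith
      have hut : (s₀ - x) / α < t := (div_lt_iff₀ hα).2 (by linarith)
      have h1 : φ t x = s₀ + β * (t - (s₀ - x)/α) := by
        rw [hφ, if_neg (not_le.2 h), if_neg (not_le.2 h2)]
      have h3 : s₀ ≤ φ t x := by rw [h1]; nlinarith
      rw [h1, hφ r, if_pos (h1 ▸ h3 : s₀ ≤ s₀ + β * (t - (s₀ - x)/α)), hφ (t+r) x,
        if_neg (not_le.2 h), if_neg (not_le.2 (by nlinarith : s₀ < x + α * (t + r)))]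
      ring

end aux


lemma abs_sub_le'' (a b : ℝ) : |a - b| ≤ |a| + |b| := by
  calc |a - b| = |a + -b| := by rw [sub_eq_add_neg]
  _ ≤ |a| + |-b| := abs_add_le _ _
  _ = |a| + |b| := by rw [abs_neg]

section main
variable {α β s₀ : ℝ} (hα : 0 < α) (hβ : 0 < β) {φ : ℝ → ℝ → ℝ}
  (hφ : ∀ t x, φ t x = if s₀ ≤ x then x + β * t else
      (if x + α * t ≤ s₀ then x + α * t else s₀ + β * (t - (s₀ - x) / α)))
include hα hβ hφ

lemma part_a1 (t : ℝ) (ht : 0 ≤ t) (f : ℝ →C₀ ℝ) :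
    ∃ g : ℝ →C₀ ℝ, ∀ x, g x = f (φ t x) := by
  refine ⟨⟨⟨fun x => f (φ t x), f.continuous.comp (phi_cont hα hβ hφ t ht)⟩, ?_⟩, fun x => rfl⟩
  have hco : Tendsto (fun x => φ t x) (cocompact ℝ) (cocompact ℝ) := by
    rw [cocompact_eq_atBot_atTop, tendsto_sup]
    constructor
    · exact (tendsto_atBot_mono (fun x => (phi_bound hα hβ hφ t ht x).2)
        (tendsto_atBot_add_const_right _ _ tendsto_id)).mono_right le_sup_left
    · exact (tendsto_atTop_mono (fun x => (phi_bound hα hβ hφ t ht x).1)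
        tendsto_id).mono_right le_sup_right
  exact (zero_at_infty f).comp hco

lemma part_a8 (f : ℝ →C₀ ℝ) (ε : ℝ) (hε : 0 < ε) :
    ∃ δ > (0:ℝ), ∀ t : ℝ, 0 < t → t < δ → ∀ x, |f (φ t x) - f x| ≤ ε := by
  obtain ⟨δ₁, hδ₁, hd⟩ := Metric.uniformContinuous_iff.1
    (ZeroAtInftyContinuousMap.uniformContinuous f) ε hε
  have hM : (0:ℝ) < max α β := lt_of_lt_of_le hα (le_max_left _ _)
  refine ⟨δ₁ / max α β, by positivity, fun t ht htδ x => ?_⟩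
  have hb := phi_bound hα hβ hφ t ht.le x
  have hdist : dist (φ t x) x < δ₁ := by
    rw [Real.dist_eq, abs_of_nonneg (by linarith [hb.1])]
    calc φ t x - x ≤ max α β * t := by linarith [hb.2]
    _ < max α β * (δ₁ / max α β) := by exact mul_lt_mul_of_pos_left htδ hM
    _ = δ₁ := by field_simp
  have := hd hdist
  rw [Real.dist_eq] at this
  exact this.le

omit hβ hφ in
lemma mvt_aux (f : ℝ → ℝ) (hdiff : ∀ x, HasDerivAt f (deriv f x) x) (a b : ℝ) (hab : a < b) :
    ∃ ξ, a ≤ ξ ∧ ξ ≤ b ∧ f b - f a = deriv f ξ * (b - a) := by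
  obtain ⟨ξ, hξ, he⟩ := exists_hasDerivAt_eq_slope f (deriv f) hab
    (fun y _ => (hdiff y).continuousAt.continuousWithinAt) (fun y _ => hdiff y)
  refine ⟨ξ, hξ.1.le, hξ.2.le, ?_⟩
  rw [he, div_mul_cancel₀]
  exact sub_ne_zero.2 hab.ne'

set_option maxHeartbeats 1000000 in
lemma part_b (l : ℝ → ℝ) (hl : ∀ x, l x = if x < s₀ then α else β)
    (f : ℝ →C₀ ℝ) (hf : ContDiff ℝ 1 (⇑f))
    (hg : ∃ g : ℝ →C₀ ℝ, ∀ x, g x = l x * deriv (⇑f) x)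
    (ε : ℝ) (hε : 0 < ε) :
    ∃ δ > (0:ℝ), ∀ t : ℝ, 0 < t → t < δ →
      ∀ x, |(f (φ t x) - f x) / t - l x * deriv (⇑f) x| ≤ ε := by
  obtain ⟨g, hgf⟩ := hg
  have hdiff : ∀ x, HasDerivAt (⇑f) (deriv (⇑f) x) x :=
    fun x => ((hf.differentiable (by norm_num)) x).hasDerivAt
  have hf'c : Continuous (deriv (⇑f)) := hf.continuous_deriv le_rfl
  have hm : (0:ℝ) < min α β := lt_min hα hβ
  -- deriv f vanishes at infinity
  have hf'0 : Tendsto (deriv (⇑f)) (cocompact ℝ) (𝓝 0) := by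
    apply squeeze_zero_norm (f := deriv (⇑f)) (a := fun x => |g x| / min α β)
    · intro x
      have hlx : min α β ≤ l x := by
        rw [hl]; split
        · exact min_le_left _ _
        · exact min_le_right _ _
      have : |g x| = l x * |deriv (⇑f) x| := by
        rw [hgf, abs_mul, abs_of_nonneg (le_trans hm.le hlx)]
      rw [Real.norm_eq_abs, le_div_iff₀ hm, this]
      have := abs_nonneg (deriv (⇑f) x)
      nlinarith
    · have : Tendsto (fun x => |g x|) (cocompact ℝ) (𝓝 0) := by
        have := (zero_at_infty g : Tendsto (⇑g) (cocompact ℝ) (𝓝 0)).abs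
        simpa using this
      simpa using this.div_const (min α β)
  have huc : UniformContinuous (deriv (⇑f)) :=
    ZeroAtInftyContinuousMap.uniformContinuous (⟨⟨deriv (⇑f), hf'c⟩, hf'0⟩ : ℝ →C₀ ℝ)
  -- key cancellation
  have hkey : (β - α) * deriv (⇑f) s₀ = 0 := by
    have h1 : Tendsto (⇑g) (𝓝[<] s₀) (𝓝 (g s₀)) :=
      (g.continuous.tendsto s₀).mono_left nhdsWithin_le_nhds
    have h2 : Tendsto (fun x => α * deriv (⇑f) x) (𝓝[<] s₀) (𝓝 (α * deriv (⇑f) s₀)) :=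
      ((continuous_const.mul hf'c).tendsto s₀).mono_left nhdsWithin_le_nhds
    have h3 : (⇑g) =ᶠ[𝓝[<] s₀] fun x => α * deriv (⇑f) x := by
      filter_upwards [self_mem_nhdsWithin] with x hx
      rw [hgf x, hl x, if_pos (show x < s₀ from hx)]
    have h5 := tendsto_nhds_unique (h1.congr' h3) h2
    have h4 : g s₀ = β * deriv (⇑f) s₀ := by rw [hgf, hl]; simp
    rw [h4] at h5
    linarith [h5]
  set M := max α β with hMdef
  have hM : (0:ℝ) < M := lt_of_lt_of_le hα (le_max_left _ _)
  set ε' := ε / (3 * M) with hε'def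
  have hε'0 : 0 < ε' := by positivity
  have h3Mε : 3 * (M * ε') = ε := by rw [hε'def]; field_simp
  obtain ⟨δ₁, hδ₁, hd⟩ := Metric.uniformContinuous_iff.1 huc ε' hε'0
  refine ⟨δ₁ / M, by positivity, fun t ht htδ x => ?_⟩
  have hMt : M * t < δ₁ := by
    calc M * t < M * (δ₁ / M) := by exact mul_lt_mul_of_pos_left htδ hM
    _ = δ₁ := by field_simp
  have hαM : α ≤ M := le_max_left _ _
  have hβM : β ≤ M := le_max_right _ _
  rcases le_or_gt s₀ x with h | h
  · -- right region
    have hlx : l x = β := by rw [hl, if_neg (not_lt.2 h)]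
    have hφx : φ t x = x + β * t := by rw [hφ, if_pos h]
    obtain ⟨ξ, hξ1, hξ2, he⟩ := mvt_aux hα (⇑f) hdiff x (x + β * t) (by have := mul_pos hβ ht; linarith)
    have hdist : |deriv (⇑f) ξ - deriv (⇑f) x| < ε' := by
      have : dist ξ x < δ₁ := by
        rw [Real.dist_eq, abs_of_nonneg (by linarith)]
        have := mul_le_mul_of_nonneg_right hβM ht.le
        linarith
      have := hd this; rwa [Real.dist_eq] at this
    rw [hφx, hlx, he]
    have hre : deriv (⇑f) ξ * (x + β * t - x) / t - β * deriv (⇑f) x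
        = β * (deriv (⇑f) ξ - deriv (⇑f) x) := by field_simp; ring
    rw [hre, abs_mul, abs_of_pos hβ]
    have hle : β * |deriv (⇑f) ξ - deriv (⇑f) x| ≤ M * ε' :=
      mul_le_mul hβM hdist.le (abs_nonneg _) hM.le
    have := mul_pos hM hε'0
    linarith
  · rcases le_or_gt (x + α * t) s₀ with h2 | h2
    · -- left region
      have hlx : l x = α := by rw [hl, if_pos h]
      have hφx : φ t x = x + α * t := by rw [hφ, if_neg (not_le.2 h), if_pos h2]
      obtain ⟨ξ, hξ1, hξ2, he⟩ := mvt_aux hα (⇑f) hdiff x (x + α * t) (by have := mul_pos hα ht; linarith)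
      have hdist : |deriv (⇑f) ξ - deriv (⇑f) x| < ε' := by
        have : dist ξ x < δ₁ := by
          rw [Real.dist_eq, abs_of_nonneg (by linarith)]
          have := mul_le_mul_of_nonneg_right hαM ht.le
          linarith
        have := hd this; rwa [Real.dist_eq] at this
      rw [hφx, hlx, he]
      have hre : deriv (⇑f) ξ * (x + α * t - x) / t - α * deriv (⇑f) x
          = α * (deriv (⇑f) ξ - deriv (⇑f) x) := by field_simp; ring
      rw [hre, abs_mul, abs_of_pos hα]
      have hle : α * |deriv (⇑f) ξ - deriv (⇑f) x| ≤ M * ε' :=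
        mul_le_mul hαM hdist.le (abs_nonneg _) hM.le
      have := mul_pos hM hε'0
      linarith
    · -- crossing region
      have hlx : l x = α := by rw [hl, if_pos h]
      set u := (s₀ - x) / α with hu
      have hu0 : 0 < u := div_pos (by linarith) hα
      have hut : u < t := (div_lt_iff₀ hα).2 (by linarith)
      have hxu : α * u = s₀ - x := by rw [hu]; field_simp
      have hφx : φ t x = s₀ + β * (t - u) := by
        rw [hφ, if_neg (not_le.2 h), if_neg (not_le.2 h2)]
      have hxφ : x < φ t x := by
        rw [hφx]; have := mul_pos hβ (sub_pos.2 hut); linarith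
      obtain ⟨ξ, hξ1, hξ2, he⟩ := mvt_aux hα (⇑f) hdiff x (φ t x) hxφ
      set c := deriv (⇑f) s₀ with hc
      have hd1 : |deriv (⇑f) ξ - c| < ε' := by
        have : dist ξ s₀ < δ₁ := by
          have p1 : α * u < α * t := mul_lt_mul_of_pos_left hut hα
          have p2 : α * t ≤ M * t := mul_le_mul_of_nonneg_right hαM ht.le
          have p3 : β * (t - u) ≤ β * t := by
            have := mul_pos hβ hu0; nlinarith
          have p4 : β * t ≤ M * t := mul_le_mul_of_nonneg_right hβM ht.le
          have hξ2' : ξ ≤ s₀ + β * (t - u) := hφx ▸ hξ2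
          rw [Real.dist_eq, abs_lt]
          constructor
          · linarith
          · linarith
        have := hd this; rwa [Real.dist_eq] at this
      have hd3 : |deriv (⇑f) x - c| < ε' := by
        have : dist x s₀ < δ₁ := by
          have p1 : α * u < α * t := mul_lt_mul_of_pos_left hut hα
          have p2 : α * t ≤ M * t := mul_le_mul_of_nonneg_right hαM ht.le
          have p5 : 0 < α * u := mul_pos hα hu0
          rw [Real.dist_eq, abs_lt]
          constructor <;> linarith
        have := hd this; rwa [Real.dist_eq] at this
      have hdx : φ t x - x = α * u + β * (t - u) := by rw [hφx]; linarith [hxu]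
      have he' : f (φ t x) - f x = deriv (⇑f) ξ * (α * u + β * (t - u)) := by
        rw [he, hdx]
      rw [hlx, he']
      have hexp : deriv (⇑f) ξ * (α * u + β * (t - u)) / t - α * deriv (⇑f) x
          = ((deriv (⇑f) ξ - c) * (α * u + β * (t - u)) - α * (deriv (⇑f) x - c) * t) / t
            + (t - u) / t * ((β - α) * c) := by
        field_simp
        ring
      rw [hexp, hkey, mul_zero, add_zero, abs_div, abs_of_pos ht, div_le_iff₀ ht]
      have hsum : 0 ≤ α * u + β * (t - u) := by
        have := mul_pos hα hu0; have := mul_pos hβ (sub_pos.2 hut); linarith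
      have hsumM : α * u + β * (t - u) ≤ M * t := by
        have q1 : α * u ≤ M * u := mul_le_mul_of_nonneg_right hαM hu0.le
        have q2 : β * (t - u) ≤ M * (t - u) :=
          mul_le_mul_of_nonneg_right hβM (by linarith)
        nlinarith
      calc |(deriv (⇑f) ξ - c) * (α * u + β * (t - u)) - α * (deriv (⇑f) x - c) * t|
          ≤ |(deriv (⇑f) ξ - c) * (α * u + β * (t - u))| + |α * (deriv (⇑f) x - c) * t| :=
            abs_sub_le'' _ _
        _ ≤ ε' * (M * t) + M * ε' * t := by
            simp only [abs_mul, abs_of_pos hα, abs_of_pos ht, abs_of_nonneg hsum]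
            have hA : |deriv (⇑f) ξ - c| * (α * u + β * (t - u)) ≤ ε' * (M * t) :=
              mul_le_mul hd1.le hsumM hsum hε'0.le
            have hB : α * |deriv (⇑f) x - c| * t ≤ M * ε' * t :=
              mul_le_mul_of_nonneg_right
                (mul_le_mul hαM hd3.le (abs_nonneg _) hM.le) ht.le
            linarith
        _ ≤ ε * t := by
            have h2 : ε * t = 3 * (M * ε') * t := by rw [h3Mε]
            have h3 : 0 ≤ M * ε' * t := by positivity
            nlinarith
lemma part_c (hαβ : α ≠ β) (f : ℝ →C₀ ℝ) (hf : ContDiff ℝ (⊤ : ℕ∞) (⇑f))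
    (hf's : deriv (⇑f) s₀ ≠ 0) :
    ¬ ∃ g : ℝ →C₀ ℝ, ∀ ε > (0:ℝ), ∃ δ > (0:ℝ), ∀ t : ℝ, 0 < t → t < δ →
      ∀ x, |(f (φ t x) - f x) / t - g x| ≤ ε := by
  rintro ⟨g, hg⟩
  have hdiff : ∀ x, HasDerivAt (⇑f) (deriv (⇑f) x) x :=
    fun x => ((hf.differentiable (by simp)) x).hasDerivAt
  set c := deriv (⇑f) s₀ with hc
  -- slope limits
  have slope_lim : ∀ k : ℝ, Tendsto (fun t => (f (s₀ + k * t) - f s₀) / t)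
      (𝓝[>] (0:ℝ)) (𝓝 (k * c)) := by
    intro k
    have h1 : HasDerivAt (fun t : ℝ => s₀ + k * t) k 0 := by
      simpa using ((hasDerivAt_id (0:ℝ)).const_mul k).const_add s₀
    have h2 : HasDerivAt (⇑f) c (s₀ + k * 0) := by rw [mul_zero, add_zero]; exact hdiff s₀
    have hF : HasDerivAt (fun t : ℝ => f (s₀ + k * t)) (c * k) 0 := h2.comp 0 h1
    have h3 := hasDerivAt_iff_tendsto_slope.1 hF
    have h4 : Tendsto (slope (fun t : ℝ => f (s₀ + k * t)) 0) (𝓝[>] (0:ℝ)) (𝓝 (c * k)) :=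
      h3.mono_left (nhdsWithin_mono _ (fun y hy => ne_of_gt hy))
    have h5 : ∀ t : ℝ, slope (fun t : ℝ => f (s₀ + k * t)) 0 t
        = (f (s₀ + k * t) - f s₀) / t := by
      intro t
      rw [slope_def_field]
      simp
    rw [mul_comm k c]
    exact h4.congr h5
  -- the difference quotient tends to g along any path x(t)
  have hmet : ∀ x : ℝ → ℝ,
      Tendsto (fun t => (f (φ t (x t)) - f (x t)) / t - g (x t)) (𝓝[>] (0:ℝ)) (𝓝 0) := by
    intro x
    rw [Metric.tendsto_nhdsWithin_nhds]
    intro ε hε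
    obtain ⟨δ, hδ, hgd⟩ := hg (ε/2) (by linarith)
    refine ⟨δ, hδ, fun {t} htmem htd => ?_⟩
    have ht : (0:ℝ) < t := htmem
    rw [Real.dist_eq, sub_zero, abs_of_pos ht] at htd
    rw [Real.dist_eq, sub_zero]
    exact lt_of_le_of_lt (hgd t ht htd (x t)) (by linarith)
  -- limit along constant path s₀
  have e1 : g s₀ = β * c := by
    have lim1 : Tendsto (fun t => (f (φ t s₀) - f s₀) / t) (𝓝[>] (0:ℝ)) (𝓝 (β * c)) := by
      refine (slope_lim β).congr' ?_
      filter_upwards [self_mem_nhdsWithin] with t ht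
      rw [hφ t s₀, if_pos le_rfl]
    have limg : Tendsto (fun t => (f (φ t s₀) - f s₀) / t) (𝓝[>] (0:ℝ)) (𝓝 (g s₀)) := by
      have := (hmet (fun _ => s₀)).add (tendsto_const_nhds (x := g s₀) (f := 𝓝[>] (0:ℝ)))
      simp only [zero_add] at this
      exact this.congr (fun t => by ring)
    exact tendsto_nhds_unique limg lim1
  -- limit along path x t = s₀ - α/2 * t
  have hφx : ∀ t : ℝ, 0 < t → φ t (s₀ - α/2 * t) = s₀ + β/2 * t := by
    intro t ht
    have h1 : ¬ s₀ ≤ s₀ - α/2 * t := by nlinarith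
    have h2 : ¬ s₀ - α/2 * t + α * t ≤ s₀ := by nlinarith
    rw [hφ, if_neg h1, if_neg h2]
    have h3 : (s₀ - (s₀ - α/2 * t)) / α = t/2 := by field_simp; ring
    rw [h3]; ring
  have lim2a : Tendsto (fun t => (f (s₀ + β/2 * t) - f (s₀ - α/2 * t)) / t)
      (𝓝[>] (0:ℝ)) (𝓝 (β/2 * c + α/2 * c)) := by
    have hb := slope_lim (β/2)
    have ha := (slope_lim (-(α/2))).neg
    have := hb.add ha
    rw [show β/2 * c + -(-(α/2) * c) = β/2 * c + α/2 * c by ring] at this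
    refine this.congr (fun t => ?_)
    rw [show s₀ + -(α/2) * t = s₀ - α/2 * t by ring]
    ring
  have lim2g : Tendsto (fun t => g (s₀ - α/2 * t)) (𝓝[>] (0:ℝ)) (𝓝 (g s₀)) := by
    have h1 : Tendsto (fun t : ℝ => s₀ - α/2 * t) (𝓝[>] (0:ℝ)) (𝓝 s₀) := by
      have : Tendsto (fun t : ℝ => s₀ - α/2 * t) (𝓝 (0:ℝ)) (𝓝 s₀) := by
        have hcont : Continuous (fun t : ℝ => s₀ - α/2 * t) := by fun_prop
        have := hcont.tendsto (0:ℝ)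
        simpa using this
      exact this.mono_left nhdsWithin_le_nhds
    exact (g.continuous.tendsto s₀).comp h1
  have lim2 : Tendsto (fun t => (f (φ t (s₀ - α/2 * t)) - f (s₀ - α/2 * t)) / t)
      (𝓝[>] (0:ℝ)) (𝓝 (g s₀)) := by
    have := (hmet (fun t => s₀ - α/2 * t)).add lim2g
    simp only [zero_add] at this
    exact this.congr (fun t => by ring)
  have lim2' : Tendsto (fun t => (f (φ t (s₀ - α/2 * t)) - f (s₀ - α/2 * t)) / t)
      (𝓝[>] (0:ℝ)) (𝓝 (β/2 * c + α/2 * c)) := by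
    refine lim2a.congr' ?_
    filter_upwards [self_mem_nhdsWithin] with t ht
    rw [hφx t ht]
  have e2 : g s₀ = β/2 * c + α/2 * c := tendsto_nhds_unique lim2 lim2'
  have : (β - α) * c = 0 := by rw [e1] at e2; linarith
  rcases mul_eq_zero.1 this with h | h
  · exact hαβ (by linarith)
  · exact hf's h
end main

/-- Let `l(x) = α` for `x < s₀`, `l(x) = β` for `x ≥ s₀` (`α, β > 0`) and
let `φ_t` be the flow of `ẋ = l(x)`. Then `T(t)f = f ∘ φ_t` is a Feller semigroup on
`C₀(ℝ)`; every continuously differentiable `f ∈ C₀(ℝ)` with `l·f' ∈ C₀(ℝ)` lies in the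
domain of its generator `L` with `Lf = l·f'`; and if `α ≠ β` and `f ∈ C_c^∞(ℝ)` with
`f'(s₀) ≠ 0` then `f` does not lie in the domain of `L`. -/
theorem deterministic_flow_feller_generator
    (α β s₀ : ℝ) (hα : 0 < α) (hβ : 0 < β)
    (l : ℝ → ℝ) (hl : ∀ x, l x = if x < s₀ then α else β)
    (φ : ℝ → ℝ → ℝ)
    (hφ : ∀ t x, φ t x = if s₀ ≤ x then x + β * t else
      (if x + α * t ≤ s₀ then x + α * t else s₀ + β * (t - (s₀ - x) / α))) :
    -- (a) T(t)f = f ∘ φ_t is a Feller semigroup on C₀(ℝ)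
    ((∀ t : ℝ, 0 ≤ t → ∀ f : ℝ →C₀ ℝ, ∃ g : ℝ →C₀ ℝ, ∀ x, g x = f (φ t x)) ∧
     (∀ t : ℝ, 0 ≤ t → ∀ f g : ℝ →C₀ ℝ, ∀ x, (f + g) (φ t x) = f (φ t x) + g (φ t x)) ∧
     (∀ t : ℝ, 0 ≤ t → ∀ (c : ℝ) (f : ℝ →C₀ ℝ), ∀ x, (c • f) (φ t x) = c * f (φ t x)) ∧
     (∀ t : ℝ, 0 ≤ t → ∀ f : ℝ →C₀ ℝ, (∀ x, 0 ≤ f x) → ∀ x, 0 ≤ f (φ t x)) ∧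
     (∀ t : ℝ, 0 ≤ t → ∀ f : ℝ →C₀ ℝ, ∀ x, |f (φ t x)| ≤ ‖f‖) ∧
     (∀ x, φ 0 x = x) ∧
     (∀ t r : ℝ, 0 ≤ t → 0 ≤ r → ∀ x, φ (t + r) x = φ r (φ t x)) ∧
     (∀ f : ℝ →C₀ ℝ, ∀ ε > (0:ℝ), ∃ δ > (0:ℝ), ∀ t : ℝ, 0 < t → t < δ →
       ∀ x, |f (φ t x) - f x| ≤ ε)) ∧
    -- (b) if f ∈ C¹ ∩ C₀ and l·f' ∈ C₀ then f is in the domain of L with Lf = l·f'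
    (∀ f : ℝ →C₀ ℝ, ContDiff ℝ 1 (⇑f) → (∃ g : ℝ →C₀ ℝ, ∀ x, g x = l x * deriv (⇑f) x) →
      ∀ ε > (0:ℝ), ∃ δ > (0:ℝ), ∀ t : ℝ, 0 < t → t < δ →
        ∀ x, |(f (φ t x) - f x) / t - l x * deriv (⇑f) x| ≤ ε) ∧
    -- (c) if α ≠ β and f ∈ C_c^∞(ℝ) with f'(s₀) ≠ 0 then f is not in the domain of L
    (α ≠ β → ∀ f : ℝ →C₀ ℝ, ContDiff ℝ (⊤ : ℕ∞) (⇑f) → HasCompactSupport (⇑f) →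
      deriv (⇑f) s₀ ≠ 0 →
      ¬ ∃ g : ℝ →C₀ ℝ, ∀ ε > (0:ℝ), ∃ δ > (0:ℝ), ∀ t : ℝ, 0 < t → t < δ →
        ∀ x, |(f (φ t x) - f x) / t - g x| ≤ ε) := by
  refine ⟨⟨fun t ht f => part_a1 hα hβ hφ t ht f,
    fun t ht f g x => by simp,
    fun t ht c f x => by simp,
    fun t ht f hf x => hf _,
    fun t ht f x => ?_,
    fun x => ?_,
    fun t r ht hr x => phi_semigroup hα hβ hφ t r ht hr x,
    fun f ε hε => part_a8 hα hβ hφ f ε hε⟩,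
    fun f hf hg ε hε => part_b hα hβ hφ l hl f hf hg ε hε,
    fun hαβ f hf hsupp hf's => part_c hα hβ hφ hαβ f hf hf's⟩
  · have h := BoundedContinuousFunction.norm_coe_le_norm f.toBCF (φ t x)
    rw [ZeroAtInftyContinuousMap.norm_toBCF_eq_norm] at h
    simpa [Real.norm_eq_abs] using h
  · rw [hφ]
    split_ifs with h1 h2
    · ring
    · ring
    · push_neg at h1 h2
      exfalso
      linarith
end
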